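/- arXiv:1308.2411 — 6 statements merged into one kernel-verified Lean document; each statement's English description precedes it below -/
import Mathlib

section
/- Let (S¹, ξ¹) and (S², ξ²) be two weak solutions of the limit chemostat system with ξ¹_0 = ξ²_0, and set C_t = sup_{0 ≤ u ≤ t} (⟨ξ¹_u, 1⟩ + ⟨ξ²_u, 1⟩). Then for every t ≥ 0 and every continuously differentiable f : X → ℝ with ‖f‖_∞ ≤ 1 and ‖f'‖_∞ ≤ 1, |⟨ξ¹_t − ξ²_t, f⟩| ≤ (ḡ + 3λ̄ + D) ∫_0^t ‖ξ¹_u − ξ²_u‖_TV du + C_t (k_g + 3 k_λ) ∫_0^t |S¹_u − S²_u| du. -/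
open MeasureTheory Filter

noncomputable section

/-- The integrand of the substrate equation:
`ρ_s(S_u, ξ_u) = D (s_in − S_u) − (k/V) ∫_X ρ_g(S_u, x) ξ_u(dx)` with `X = [0, mmax]`. -/
def subIntegrand (mmax D sIn k V : ℝ) (rg : ℝ → ℝ → ℝ)
    (S : ℝ → ℝ) (ξ : ℝ → Measure ℝ) (u : ℝ) : ℝ :=
  D * (sIn - S u) - (k / V) * ∫ x in Set.Icc (0:ℝ) mmax, rg (S u) x ∂(ξ u)

/-- The integrand of the weak population equation, for a test function `f`:
`∫_X ρ_g(S_u,x) f'(x) ξ_u(dx)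
 + ∫_X ∫_0^1 λ(S_u,x) (f(αx) + f((1−α)x) − f(x)) Q(dα) ξ_u(dx) − D ⟨ξ_u, f⟩`. -/
def popIntegrand (mmax D : ℝ) (rg lam : ℝ → ℝ → ℝ) (Q : Measure ℝ) (f : ℝ → ℝ)
    (S : ℝ → ℝ) (ξ : ℝ → Measure ℝ) (u : ℝ) : ℝ :=
  (∫ x in Set.Icc (0:ℝ) mmax, rg (S u) x * deriv f x ∂(ξ u))
  + (∫ x in Set.Icc (0:ℝ) mmax,
      ∫ α in Set.Icc (0:ℝ) 1, lam (S u) x * (f (α * x) + f ((1 - α) * x) - f x) ∂Q ∂(ξ u))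
  - D * ∫ x in Set.Icc (0:ℝ) mmax, f x ∂(ξ u)

/-- Weak solution `(S, ξ)` of the limit chemostat system:
`S : [0,∞) → [0,∞)` is continuous, `ξ` takes values in the finite measures on
`X = [0, mmax]`, `u ↦ ⟨ξ_u, g⟩` is Borel measurable and locally bounded for every
continuous `g`, and the substrate and population equations (i) and (ii) hold
(with genuinely integrable time integrands). -/
structure IsWeakSolution (mmax D sIn k V : ℝ) (rg lam : ℝ → ℝ → ℝ) (Q : Measure ℝ)
    (S : ℝ → ℝ) (ξ : ℝ → Measure ℝ) : Prop where
  S_cont : Continuous S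
  S_nonneg : ∀ t, 0 ≤ t → 0 ≤ S t
  xi_fin : ∀ t, IsFiniteMeasure (ξ t)
  xi_supp : ∀ t, (ξ t) (Set.Icc (0:ℝ) mmax)ᶜ = 0
  xi_meas : ∀ g : ℝ → ℝ, Continuous g →
      Measurable fun u => ∫ x in Set.Icc (0:ℝ) mmax, g x ∂(ξ u)
  xi_locbdd : ∀ g : ℝ → ℝ, Continuous g → ∀ T : ℝ, ∃ C : ℝ,
      ∀ u ∈ Set.Icc (0:ℝ) T, |∫ x in Set.Icc (0:ℝ) mmax, g x ∂(ξ u)| ≤ C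
  S_int : ∀ t, 0 ≤ t →
      IntervalIntegrable (subIntegrand mmax D sIn k V rg S ξ) volume 0 t
  S_eq : ∀ t, 0 ≤ t →
      S t = S 0 + ∫ u in (0:ℝ)..t, subIntegrand mmax D sIn k V rg S ξ u
  xi_int : ∀ f : ℝ → ℝ, ContDiff ℝ 1 f → ∀ t, 0 ≤ t →
      IntervalIntegrable (popIntegrand mmax D rg lam Q f S ξ) volume 0 t
  xi_eq : ∀ f : ℝ → ℝ, ContDiff ℝ 1 f → ∀ t, 0 ≤ t →
      (∫ x in Set.Icc (0:ℝ) mmax, f x ∂(ξ t))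
        = (∫ x in Set.Icc (0:ℝ) mmax, f x ∂(ξ 0))
          + ∫ u in (0:ℝ)..t, popIntegrand mmax D rg lam Q f S ξ u

/-- The standing hypotheses on the data of the chemostat model. -/
structure ChemostatHyps (mmax D sIn k V gbar lamBar kg klam : ℝ)
    (rg lam : ℝ → ℝ → ℝ) (Q : Measure ℝ) : Prop where
  mmax_pos : 0 < mmax
  D_pos : 0 < D
  sIn_pos : 0 < sIn
  k_pos : 0 < k
  V_pos : 0 < V
  gbar_pos : 0 < gbar
  lamBar_pos : 0 < lamBar
  kg_nonneg : 0 ≤ kg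
  klam_nonneg : 0 ≤ klam
  rg_meas : ∀ s : ℝ, Measurable (rg s)
  rg_nonneg : ∀ s, 0 ≤ s → ∀ x ∈ Set.Icc (0:ℝ) mmax, 0 ≤ rg s x
  rg_le : ∀ s, 0 ≤ s → ∀ x ∈ Set.Icc (0:ℝ) mmax, rg s x ≤ gbar
  rg_lip : ∀ s₁ s₂, 0 ≤ s₁ → 0 ≤ s₂ → ∀ x ∈ Set.Icc (0:ℝ) mmax,
      |rg s₁ x - rg s₂ x| ≤ kg * |s₁ - s₂|
  rg_zero : ∀ x ∈ Set.Icc (0:ℝ) mmax, rg 0 x = 0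
  rg_mmax : ∀ s, 0 ≤ s → rg s mmax = 0
  lam_meas : ∀ s : ℝ, Measurable (lam s)
  lam_nonneg : ∀ s, 0 ≤ s → ∀ x ∈ Set.Icc (0:ℝ) mmax, 0 ≤ lam s x
  lam_le : ∀ s, 0 ≤ s → ∀ x ∈ Set.Icc (0:ℝ) mmax, lam s x ≤ lamBar
  lam_lip : ∀ s₁ s₂, 0 ≤ s₁ → 0 ≤ s₂ → ∀ x ∈ Set.Icc (0:ℝ) mmax,
      |lam s₁ x - lam s₂ x| ≤ klam * |s₁ - s₂|
  Q_prob : IsProbabilityMeasure Q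
  Q_supp : Q (Set.Icc (0:ℝ) 1)ᶜ = 0
  Q_symm : Q.map (fun α => 1 - α) = Q

/-- Total variation distance `‖μ − ν‖_TV` between two finite measures, defined through the
total variation of the signed measure `μ − ν`. -/
def tvNorm {Ω : Type*} [MeasurableSpace Ω] (μ ν : Measure Ω)
    (hμ : IsFiniteMeasure μ) (hν : IsFiniteMeasure ν) : ℝ :=
  (((@Measure.toSignedMeasure Ω _ μ hμ) - (@Measure.toSignedMeasure Ω _ ν hν)).totalVariation
      Set.univ).toReal

/-! Subtracting the weak population equations of the two solutions, with the same initial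
datum, writes `⟨ξ¹_t - ξ²_t, f⟩` as the time integral of the difference of the two integrands.
At a fixed time each of its three terms (growth, division, dilution) has the form
`⟨ξ¹, h(S¹)⟩ - ⟨ξ², h(S²)⟩ = ⟨ξ¹ - ξ², h(S¹)⟩ + ⟨ξ², h(S¹) - h(S²)⟩`; the first part is at most
`sup |h| · ‖ξ¹ - ξ²‖_TV` and the second at most the mass of `ξ²` times the Lipschitz constant of
the rate in the substrate times `|S¹ - S²|`. The total variation is read off the Jordan
decomposition `(μ - ν, ν - μ)`; writing its positive part as a supremum over a countable
generating algebra of sets shows that `u ↦ ‖ξ¹_u - ξ²_u‖_TV` is measurable, so that the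
time integral on the right is a genuine one. -/

open scoped BoundedContinuousFunction symmDiff

namespace MeasureTheory.Measure

variable {Ω : Type*} [MeasurableSpace Ω]

section FiniteMeasures

variable {μ ν : Measure Ω} [IsFiniteMeasure μ] [IsFiniteMeasure ν]

lemma tvNorm_eq_measureReal_sub_add :
    tvNorm μ ν ‹_› ‹_› = (μ - ν).real Set.univ + (ν - μ).real Set.univ := by
  simp only [tvNorm, SignedMeasure.totalVariation, toJordanDecomposition_toSignedMeasure_sub,
    jordanDecompositionOfToSignedMeasureSub_posPart,
    jordanDecompositionOfToSignedMeasureSub_negPart, coe_add, Pi.add_apply]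
  exact ENNReal.toReal_add (measure_ne_top _ _) (measure_ne_top _ _)

lemma add_sub_eq_add_sub : μ + (ν - μ) = ν + (μ - ν) := by
  have h := sub_toSignedMeasure_eq_toSignedMeasure_sub (μ := μ) (ν := ν)
  rw [sub_eq_sub_iff_add_eq_add] at h
  rw [← toSignedMeasure_eq_toSignedMeasure_iff, toSignedMeasure_add, toSignedMeasure_add, h,
    add_comm]

lemma measureReal_sub_measureReal_eq (E : Set Ω) :
    μ.real E - ν.real E = (μ - ν).real E - (ν - μ).real E := by
  have : (μ + (ν - μ)).real E = (ν + (μ - ν)).real E := by rw [add_sub_eq_add_sub]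
  rw [measureReal_add_apply, measureReal_add_apply] at this
  linarith

lemma tvNorm_le_measureReal_univ_add :
    tvNorm μ ν ‹_› ‹_› ≤ μ.real Set.univ + ν.real Set.univ := by
  rw [tvNorm_eq_measureReal_sub_add]
  gcongr <;> exact ENNReal.toReal_mono (measure_ne_top _ _) (sub_le _)

lemma measureReal_sub_measureReal_le (E : Set Ω) :
    μ.real E - ν.real E ≤ (μ - ν).real Set.univ := by
  rw [measureReal_sub_measureReal_eq]
  linarith [measureReal_nonneg (μ := ν - μ) (s := E),
    measureReal_mono (μ := μ - ν) (Set.subset_univ E)]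

lemma measureReal_compl_sub_measureReal_compl_eq {s : Set Ω} (hs : IsHahnDecomposition μ ν s) :
    μ.real sᶜ - ν.real sᶜ = (μ - ν).real Set.univ := by
  have h₁ : (μ - ν).real s = 0 := by
    simp [measureReal_def, sub_apply_eq_zero_of_isHahnDecomposition hs]
  have h₂ : (ν - μ).real sᶜ = 0 := by
    simp [measureReal_def, sub_apply_eq_zero_of_isHahnDecomposition hs.compl]
  rw [measureReal_sub_measureReal_eq, h₂, ← measureReal_add_measureReal_compl hs.measurableSet,
    h₁, zero_add, sub_zero]

lemma abs_integral_sub_integral_le_mul_tvNorm {g : Ω → ℝ} (hg : Measurable g) {M : ℝ}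
    (hM : ∀ x, |g x| ≤ M) :
    |∫ x, g x ∂μ - ∫ x, g x ∂ν| ≤ M * tvNorm μ ν ‹_› ‹_› := by
  have hint : ∀ (ρ : Measure Ω) [IsFiniteMeasure ρ], Integrable g ρ := fun ρ _ =>
    (integrable_const M).mono' hg.aestronglyMeasurable (.of_forall hM)
  have hbound : ∀ (ρ : Measure Ω) [IsFiniteMeasure ρ], |∫ x, g x ∂ρ| ≤ M * ρ.real Set.univ :=
    fun ρ _ => norm_integral_le_of_norm_le_const (f := g) (.of_forall hM)
  have hdiff : ∫ x, g x ∂μ - ∫ x, g x ∂ν = ∫ x, g x ∂(μ - ν) - ∫ x, g x ∂(ν - μ) := by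
    have : ∫ x, g x ∂(μ + (ν - μ)) = ∫ x, g x ∂(ν + (μ - ν)) := by rw [add_sub_eq_add_sub]
    rw [integral_add_measure (hint _) (hint _), integral_add_measure (hint _) (hint _)] at this
    linarith
  rw [hdiff, tvNorm_eq_measureReal_sub_add, mul_add]
  exact (abs_sub _ _).trans (add_le_add (hbound _) (hbound _))

lemma abs_setIntegral_sub_setIntegral_le {s : Set Ω} (hs : MeasurableSet s) {g₁ g₂ : Ω → ℝ}
    (hg₁ : Measurable g₁) (hg₂ : Measurable g₂) {M L : ℝ} (hM₀ : 0 ≤ M)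
    (hM : ∀ x ∈ s, |g₁ x| ≤ M) (hL : ∀ x ∈ s, |g₁ x - g₂ x| ≤ L) :
    |∫ x in s, g₁ x ∂μ - ∫ x in s, g₂ x ∂ν| ≤ M * tvNorm μ ν ‹_› ‹_› + L * ν.real s := by
  have hg₂M : ∀ x ∈ s, |g₂ x| ≤ M + L := fun x hx => by
    linarith [abs_sub_abs_le_abs_sub (g₂ x) (g₁ x), abs_sub_comm (g₂ x) (g₁ x), hM x hx, hL x hx]
  have hint : ∀ {g : Ω → ℝ} {C : ℝ}, Measurable g → (∀ x ∈ s, |g x| ≤ C) → IntegrableOn g s ν :=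
    fun hg hC => integrableOn_of_bounded (measure_ne_top _ _) hg.aestronglyMeasurable
      (ae_restrict_of_forall_mem hs hC)
  have htv : |∫ x in s, g₁ x ∂μ - ∫ x in s, g₁ x ∂ν| ≤ M * tvNorm μ ν ‹_› ‹_› := by
    rw [← integral_indicator hs, ← integral_indicator hs]
    refine abs_integral_sub_integral_le_mul_tvNorm (hg₁.indicator hs) fun x => ?_
    by_cases hx : x ∈ s <;> simp [hx, hM, hM₀]
  have hlip : |∫ x in s, g₁ x ∂ν - ∫ x in s, g₂ x ∂ν| ≤ L * ν.real s := by
    rw [← integral_sub (hint hg₁ hM) (hint hg₂ hg₂M)]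
    exact norm_setIntegral_le_of_norm_le_const (f := fun x => g₁ x - g₂ x) (measure_lt_top _ _) hL
  exact (abs_sub_le _ _ _).trans (add_le_add htv hlip)

lemma abs_setIntegral_mul_sub_setIntegral_mul_le {s : Set Ω} (hs : MeasurableSet s)
    {a₁ a₂ φ : Ω → ℝ} (ha₁ : Measurable a₁) (ha₂ : Measurable a₂) (hφ : Measurable φ)
    {A K c : ℝ} (hA : 0 ≤ A) (hc : 0 ≤ c) (ha₁A : ∀ x ∈ s, |a₁ x| ≤ A)
    (hK : ∀ x ∈ s, |a₁ x - a₂ x| ≤ K) (hφc : ∀ x ∈ s, |φ x| ≤ c) :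
    |∫ x in s, a₁ x * φ x ∂μ - ∫ x in s, a₂ x * φ x ∂ν|
      ≤ A * c * tvNorm μ ν ‹_› ‹_› + K * c * ν.real s := by
  refine abs_setIntegral_sub_setIntegral_le (g₁ := fun x => a₁ x * φ x)
    (g₂ := fun x => a₂ x * φ x) hs (ha₁.mul hφ) (ha₂.mul hφ) (mul_nonneg hA hc)
    (fun x hx => ?_) (fun x hx => ?_)
  · rw [abs_mul]
    exact mul_le_mul (ha₁A x hx) (hφc x hx) (abs_nonneg _) hA
  · rw [← sub_mul, abs_mul]
    exact mul_le_mul (hK x hx) (hφc x hx) (abs_nonneg _) ((abs_nonneg _).trans (hK x hx))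

end FiniteMeasures

lemma measurableSet_of_mem_generateSetAlgebra {𝒜 : Set (Set Ω)}
    (h𝒜 : ∀ s ∈ 𝒜, MeasurableSet s) {E : Set Ω} (hE : E ∈ generateSetAlgebra 𝒜) :
    MeasurableSet E := by
  induction hE with
  | base s hs => exact h𝒜 s hs
  | empty => exact .empty
  | compl s _ ih => exact ih.compl
  | union s t _ _ ihs iht => exact ihs.union iht

lemma measureReal_sub_univ_eq_iSup [MeasurableSpace.CountablyGenerated Ω]
    (μ ν : Measure Ω) [IsFiniteMeasure μ] [IsFiniteMeasure ν] :
    (μ - ν).real Set.univ = ⨆ E : generateSetAlgebra (MeasurableSpace.countableGeneratingSet Ω),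
      (μ.real E - ν.real E) := by
  set 𝒜 := generateSetAlgebra (MeasurableSpace.countableGeneratingSet Ω)
  have h𝒜 : IsSetAlgebra 𝒜 := isSetAlgebra_generateSetAlgebra
  have hgen : ‹MeasurableSpace Ω› = MeasurableSpace.generateFrom 𝒜 := by
    rw [generateFrom_generateSetAlgebra_eq, MeasurableSpace.generateFrom_countableGeneratingSet]
  have : Nonempty 𝒜 := ⟨⟨∅, h𝒜.empty_mem⟩⟩
  refine le_antisymm ?_ (ciSup_le fun E => measureReal_sub_measureReal_le (μ := μ) (ν := ν) E)
  obtain ⟨s, hs⟩ := exists_isHahnDecomposition μ ν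
  refine le_of_forall_pos_le_add fun ε hε => ?_
  obtain ⟨E, hE𝒜, hE⟩ := exists_measure_symmDiff_lt_of_generateFrom_isSetRing (μ := μ + ν)
    h𝒜.isSetRing ⟨{Set.univ}, Set.countable_singleton _, by simpa using h𝒜.univ_mem, by simp⟩
    hgen hs.measurableSet.compl (ENNReal.ofReal_pos.2 hε)
  have hEm : MeasurableSet E := measurableSet_of_mem_generateSetAlgebra
    (fun _ => MeasurableSpace.measurableSet_countableGeneratingSet) hE𝒜
  have hμ := abs_measureReal_sub_le_measureReal_symmDiff (μ := μ) hEm.nullMeasurableSet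
    hs.measurableSet.compl.nullMeasurableSet
  have hν := abs_measureReal_sub_le_measureReal_symmDiff (μ := ν) hEm.nullMeasurableSet
    hs.measurableSet.compl.nullMeasurableSet
  have hsum : (μ + ν).real (E ∆ sᶜ) < ε := ENNReal.toReal_lt_of_lt_ofReal hE
  rw [measureReal_add_apply] at hsum
  have hsup := le_ciSup (f := fun E : 𝒜 => μ.real E - ν.real E)
    ⟨_, Set.forall_mem_range.2 fun E => measureReal_sub_measureReal_le (μ := μ) (ν := ν) E⟩ ⟨E, hE𝒜⟩
  rw [← measureReal_compl_sub_measureReal_compl_eq hs]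
  linarith [abs_le.1 hμ, abs_le.1 hν]

variable {α : Type*} [MeasurableSpace α]

theorem measurable_of_measurable_integral [PseudoEMetricSpace Ω] [BorelSpace Ω]
    {ξ : α → Measure Ω} [∀ a, IsFiniteMeasure (ξ a)]
    (h : ∀ g : Ω →ᵇ ℝ, Measurable fun a => ∫ x, g x ∂(ξ a)) : Measurable ξ := by
  have hclosed : ∀ F : Set Ω, IsClosed F → Measurable fun a => ξ a F := fun F hF => by
    simp_rw [← ofReal_measureReal (measure_ne_top (ξ _) F)]
    exact Measurable.ennreal_ofReal <| measurable_of_tendsto_metrizable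
      (fun n => h (BoundedContinuousFunction.comp _ (LipschitzWith.subtype_val _)
        (thickenedIndicator (Nat.one_div_pos_of_nat (n := n)) F)))
      (tendsto_pi_nhds.2 fun a => tendsto_integral_thickenedIndicator_of_isClosed (ξ a) hF
        (fun _ => Nat.one_div_pos_of_nat) tendsto_one_div_add_atTop_nhds_zero_nat)
  exact .measure_of_isPiSystem (BorelSpace.measurable_eq.trans borel_eq_generateFrom_isClosed)
    isPiSystem_isClosed hclosed (hclosed _ isClosed_univ)

theorem measurable_tvNorm [MeasurableSpace.CountablyGenerated Ω] {μ ν : α → Measure Ω}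
    [∀ a, IsFiniteMeasure (μ a)] [∀ a, IsFiniteMeasure (ν a)] (hμ : Measurable μ)
    (hν : Measurable ν) : Measurable fun a => tvNorm (μ a) (ν a) inferInstance inferInstance := by
  have hreal : ∀ {ρ : α → Measure Ω}, Measurable ρ → ∀ E, MeasurableSet E →
      Measurable fun a => (ρ a).real E := fun hρ _ hE =>
    ((measurable_coe hE).comp hρ).ennreal_toReal
  have : Countable (generateSetAlgebra (MeasurableSpace.countableGeneratingSet Ω)) :=
    (countable_generateSetAlgebra MeasurableSpace.countable_countableGeneratingSet).to_subtype
  have hpos : Measurable fun a => (μ a - ν a).real Set.univ := by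
    simp_rw [measureReal_sub_univ_eq_iSup]
    have hE : ∀ E : generateSetAlgebra (MeasurableSpace.countableGeneratingSet Ω),
        MeasurableSet (E : Set Ω) := fun E =>
      measurableSet_of_mem_generateSetAlgebra
        (fun _ => MeasurableSpace.measurableSet_countableGeneratingSet) E.2
    exact .iSup fun E => (hreal hμ _ (hE E)).sub (hreal hν _ (hE E))
  have htv : ∀ a, tvNorm (μ a) (ν a) inferInstance inferInstance
      = 2 * (μ a - ν a).real Set.univ - ((μ a).real Set.univ - (ν a).real Set.univ) := fun a => by
    rw [tvNorm_eq_measureReal_sub_add, measureReal_sub_measureReal_eq]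
    ring
  simp_rw [htv]
  exact (measurable_const.mul hpos).sub
    ((hreal hμ _ MeasurableSet.univ).sub (hreal hν _ MeasurableSet.univ))

end MeasureTheory.Measure

open MeasureTheory.Measure

def splitDefect (Q : Measure ℝ) (f : ℝ → ℝ) (x : ℝ) : ℝ :=
  ∫ α in Set.Icc (0:ℝ) 1, (f (α * x) + f ((1 - α) * x) - f x) ∂Q

lemma measurable_splitDefect {Q : Measure ℝ} [SFinite Q] {f : ℝ → ℝ} (hf : Continuous f) :
    Measurable (splitDefect Q f) :=
  (StronglyMeasurable.integral_prod_right (f := fun x α : ℝ => f (α * x) + f ((1 - α) * x) - f x)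
    (Continuous.stronglyMeasurable (by fun_prop))).measurable

lemma abs_splitDefect_le {Q : Measure ℝ} [IsProbabilityMeasure Q] {f : ℝ → ℝ} {m : ℝ}
    (hf : ∀ x ∈ Set.Icc (0:ℝ) m, |f x| ≤ 1) {x : ℝ} (hx : x ∈ Set.Icc (0:ℝ) m) :
    |splitDefect Q f x| ≤ 3 := by
  have hmem : ∀ β ∈ Set.Icc (0:ℝ) 1, β * x ∈ Set.Icc (0:ℝ) m := fun β hβ =>
    ⟨mul_nonneg hβ.1 hx.1, (mul_le_of_le_one_left hx.1 hβ.2).trans hx.2⟩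
  have hbound : ∀ α ∈ Set.Icc (0:ℝ) 1, |f (α * x) + f ((1 - α) * x) - f x| ≤ 3 := fun α hα => by
    have h₁ := hf _ (hmem α hα)
    have h₂ := hf _ (hmem (1 - α) ⟨by linarith [hα.2], by linarith [hα.1]⟩)
    have h₃ := hf x hx
    calc _ ≤ |f (α * x)| + |f ((1 - α) * x)| + |f x| := (abs_sub _ _).trans
          (add_le_add_left (abs_add_le _ _) _)
      _ ≤ 3 := by linarith
  calc |splitDefect Q f x| ≤ 3 * Q.real (Set.Icc 0 1) :=
        norm_setIntegral_le_of_norm_le_const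
          (f := fun α => f (α * x) + f ((1 - α) * x) - f x) (measure_lt_top _ _) hbound
    _ ≤ 3 := by linarith [measureReal_le_one (μ := Q) (s := Set.Icc (0:ℝ) 1)]

lemma popIntegrand_eq (mmax D : ℝ) (rg lam : ℝ → ℝ → ℝ) (Q : Measure ℝ) (f : ℝ → ℝ)
    (S : ℝ → ℝ) (ξ : ℝ → Measure ℝ) (u : ℝ) :
    popIntegrand mmax D rg lam Q f S ξ u
      = (∫ x in Set.Icc (0:ℝ) mmax, rg (S u) x * deriv f x ∂(ξ u))
        + (∫ x in Set.Icc (0:ℝ) mmax, lam (S u) x * splitDefect Q f x ∂(ξ u))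
        - D * ∫ x in Set.Icc (0:ℝ) mmax, f x ∂(ξ u) := by
  simp only [popIntegrand, splitDefect, integral_const_mul]

lemma abs_popIntegrand_sub_popIntegrand_le {mmax D sIn k V gbar lamBar kg klam : ℝ}
    {rg lam : ℝ → ℝ → ℝ} {Q : Measure ℝ}
    (hyp : ChemostatHyps mmax D sIn k V gbar lamBar kg klam rg lam Q) {f : ℝ → ℝ}
    (hf : ContDiff ℝ 1 f) (hf₁ : ∀ x ∈ Set.Icc (0:ℝ) mmax, |f x| ≤ 1)
    (hf₂ : ∀ x ∈ Set.Icc (0:ℝ) mmax, |deriv f x| ≤ 1) {S₁ S₂ : ℝ → ℝ} {ξ₁ ξ₂ : ℝ → Measure ℝ}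
    {u : ℝ} [IsFiniteMeasure (ξ₁ u)] [IsFiniteMeasure (ξ₂ u)] (hS₁ : 0 ≤ S₁ u) (hS₂ : 0 ≤ S₂ u) :
    |popIntegrand mmax D rg lam Q f S₁ ξ₁ u - popIntegrand mmax D rg lam Q f S₂ ξ₂ u|
      ≤ (gbar + 3 * lamBar + D) * tvNorm (ξ₁ u) (ξ₂ u) ‹_› ‹_›
        + (ξ₂ u).real (Set.Icc 0 mmax) * (kg + 3 * klam) * |S₁ u - S₂ u| := by
  have := hyp.Q_prob
  have hD := hyp.D_pos.le
  have hgrowth := abs_setIntegral_mul_sub_setIntegral_mul_le (μ := ξ₁ u) (ν := ξ₂ u)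
    measurableSet_Icc (hyp.rg_meas _) (hyp.rg_meas _) (hf.continuous_deriv le_rfl).measurable
    hyp.gbar_pos.le zero_le_one
    (fun x hx => abs_le.2 ⟨by linarith [hyp.rg_nonneg _ hS₁ x hx, hyp.gbar_pos],
      hyp.rg_le _ hS₁ x hx⟩)
    (hyp.rg_lip _ _ hS₁ hS₂) hf₂
  have hdivision := abs_setIntegral_mul_sub_setIntegral_mul_le (μ := ξ₁ u) (ν := ξ₂ u)
    measurableSet_Icc (hyp.lam_meas _) (hyp.lam_meas _) (measurable_splitDefect hf.continuous)
    hyp.lamBar_pos.le zero_le_three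
    (fun x hx => abs_le.2 ⟨by linarith [hyp.lam_nonneg _ hS₁ x hx, hyp.lamBar_pos],
      hyp.lam_le _ hS₁ x hx⟩)
    (hyp.lam_lip _ _ hS₁ hS₂) (fun x hx => abs_splitDefect_le (Q := Q) hf₁ hx)
  have hdilution : |D * ∫ x in Set.Icc (0:ℝ) mmax, f x ∂(ξ₁ u)
      - D * ∫ x in Set.Icc (0:ℝ) mmax, f x ∂(ξ₂ u)| ≤ D * tvNorm (ξ₁ u) (ξ₂ u) ‹_› ‹_› := by
    rw [← mul_sub, abs_mul, abs_of_nonneg hD]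
    simpa using mul_le_mul_of_nonneg_left (abs_setIntegral_sub_setIntegral_le measurableSet_Icc
      hf.continuous.measurable hf.continuous.measurable zero_le_one hf₁ (L := 0) (by simp)) hD
  rw [popIntegrand_eq, popIntegrand_eq, abs_le]
  constructor <;> linarith [abs_le.1 hgrowth, abs_le.1 hdivision, abs_le.1 hdilution]

namespace IsWeakSolution

variable {mmax D sIn k V : ℝ} {rg lam : ℝ → ℝ → ℝ} {Q : Measure ℝ} {S : ℝ → ℝ}
  {ξ : ℝ → Measure ℝ}

lemma restrict_Icc_eq (h : IsWeakSolution mmax D sIn k V rg lam Q S ξ) (u : ℝ) :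
    (ξ u).restrict (Set.Icc 0 mmax) = ξ u :=
  restrict_eq_self_of_ae_mem (h.xi_supp u)

lemma setIntegral_one_eq (h : IsWeakSolution mmax D sIn k V rg lam Q S ξ) (u : ℝ) :
    ∫ _ in Set.Icc (0:ℝ) mmax, (1:ℝ) ∂(ξ u) = (ξ u).real Set.univ := by
  rw [setIntegral_const, smul_eq_mul, mul_one, measureReal_def, measureReal_def,
    ← restrict_apply_univ, h.restrict_Icc_eq]

lemma exists_setIntegral_one_le (h : IsWeakSolution mmax D sIn k V rg lam Q S ξ) (T : ℝ) :
    ∃ C, ∀ u ∈ Set.Icc (0:ℝ) T, ∫ _ in Set.Icc (0:ℝ) mmax, (1:ℝ) ∂(ξ u) ≤ C :=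
  (h.xi_locbdd _ continuous_const T).imp fun _ hC u hu => (abs_le.1 (hC u hu)).2

lemma measurable (h : IsWeakSolution mmax D sIn k V rg lam Q S ξ) : Measurable ξ := by
  have := h.xi_fin
  refine measurable_of_measurable_integral fun g => ?_
  simpa only [h.restrict_Icc_eq] using h.xi_meas g g.continuous

end IsWeakSolution

lemma intervalIntegrable_tvNorm {mmax D sIn k V : ℝ} {rg lam : ℝ → ℝ → ℝ} {Q : Measure ℝ}
    {S₁ S₂ : ℝ → ℝ} {ξ₁ ξ₂ : ℝ → Measure ℝ}
    (h₁ : IsWeakSolution mmax D sIn k V rg lam Q S₁ ξ₁)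
    (h₂ : IsWeakSolution mmax D sIn k V rg lam Q S₂ ξ₂) {t : ℝ} (ht : 0 ≤ t) :
    IntervalIntegrable (fun u => tvNorm (ξ₁ u) (ξ₂ u) (h₁.xi_fin u) (h₂.xi_fin u)) volume 0 t := by
  have := h₁.xi_fin
  have := h₂.xi_fin
  obtain ⟨C₁, hC₁⟩ := h₁.exists_setIntegral_one_le t
  obtain ⟨C₂, hC₂⟩ := h₂.exists_setIntegral_one_le t
  refine (intervalIntegrable_const (c := C₁ + C₂)).mono_fun'
    (measurable_tvNorm h₁.measurable h₂.measurable).aestronglyMeasurable ?_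
  rw [Set.uIoc_of_le ht]
  filter_upwards [ae_restrict_mem measurableSet_Ioc] with u hu
  have hu' : u ∈ Set.Icc 0 t := Set.Ioc_subset_Icc_self hu
  rw [Real.norm_of_nonneg (by exact ENNReal.toReal_nonneg)]
  refine tvNorm_le_measureReal_univ_add.trans (add_le_add ?_ ?_)
  · simpa only [h₁.setIntegral_one_eq] using hC₁ u hu'
  · simpa only [h₂.setIntegral_one_eq] using hC₂ u hu'

lemma measureReal_Icc_le_iSup_masses {mmax D sIn k V : ℝ} {rg lam : ℝ → ℝ → ℝ}
    {Q : Measure ℝ} {S₁ S₂ : ℝ → ℝ} {ξ₁ ξ₂ : ℝ → Measure ℝ}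
    (h₁ : IsWeakSolution mmax D sIn k V rg lam Q S₁ ξ₁)
    (h₂ : IsWeakSolution mmax D sIn k V rg lam Q S₂ ξ₂) {t u : ℝ} (hu : u ∈ Set.Icc 0 t) :
    (ξ₂ u).real (Set.Icc 0 mmax) ≤ ⨆ v : Set.Icc (0:ℝ) t,
      ((∫ _ in Set.Icc (0:ℝ) mmax, (1:ℝ) ∂(ξ₁ v)) + ∫ _ in Set.Icc (0:ℝ) mmax, (1:ℝ) ∂(ξ₂ v)) := by
  obtain ⟨C₁, hC₁⟩ := h₁.exists_setIntegral_one_le t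
  obtain ⟨C₂, hC₂⟩ := h₂.exists_setIntegral_one_le t
  calc (ξ₂ u).real (Set.Icc 0 mmax) = ∫ _ in Set.Icc (0:ℝ) mmax, (1:ℝ) ∂(ξ₂ u) := by simp
    _ ≤ (∫ _ in Set.Icc (0:ℝ) mmax, (1:ℝ) ∂(ξ₁ u)) + ∫ _ in Set.Icc (0:ℝ) mmax, (1:ℝ) ∂(ξ₂ u) :=
      le_add_of_nonneg_left (setIntegral_nonneg measurableSet_Icc fun _ _ => zero_le_one)
    _ ≤ _ := le_ciSup (f := fun v : Set.Icc (0:ℝ) t => _) ⟨C₁ + C₂,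
      Set.forall_mem_range.2 fun v => add_le_add (hC₁ v v.2) (hC₂ v v.2)⟩ ⟨u, hu⟩

/-- For two weak solutions `(S¹, ξ¹)`, `(S², ξ²)` of the limit chemostat
system with the same initial population `ξ¹_0 = ξ²_0`, setting
`C_t = sup_{0 ≤ u ≤ t} (⟨ξ¹_u, 1⟩ + ⟨ξ²_u, 1⟩)`, for every `t ≥ 0` and every `C¹` test
function `f` with `‖f‖_∞ ≤ 1`, `‖f'‖_∞ ≤ 1` on `X`:
`|⟨ξ¹_t − ξ²_t, f⟩| ≤ (ḡ + 3λ̄ + D) ∫_0^t ‖ξ¹_u − ξ²_u‖_TV du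
   + C_t (k_g + 3 k_λ) ∫_0^t |S¹_u − S²_u| du`. -/
theorem weak_solutions_pairing_estimate
    (mmax D sIn k V gbar lamBar kg klam : ℝ)
    (rg lam : ℝ → ℝ → ℝ) (Q : Measure ℝ)
    (hyp : ChemostatHyps mmax D sIn k V gbar lamBar kg klam rg lam Q)
    (S₁ S₂ : ℝ → ℝ) (ξ₁ ξ₂ : ℝ → Measure ℝ)
    (hsol₁ : IsWeakSolution mmax D sIn k V rg lam Q S₁ ξ₁)
    (hsol₂ : IsWeakSolution mmax D sIn k V rg lam Q S₂ ξ₂)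
    (hxi0 : ξ₁ 0 = ξ₂ 0) :
    ∀ t, 0 ≤ t → ∀ f : ℝ → ℝ, ContDiff ℝ 1 f →
      (∀ x ∈ Set.Icc (0:ℝ) mmax, |f x| ≤ 1) →
      (∀ x ∈ Set.Icc (0:ℝ) mmax, |deriv f x| ≤ 1) →
      |(∫ x in Set.Icc (0:ℝ) mmax, f x ∂(ξ₁ t))
          - ∫ x in Set.Icc (0:ℝ) mmax, f x ∂(ξ₂ t)|
        ≤ (gbar + 3 * lamBar + D)
              * (∫ u in (0:ℝ)..t, tvNorm (ξ₁ u) (ξ₂ u) (hsol₁.xi_fin u) (hsol₂.xi_fin u))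
          + (⨆ u : Set.Icc (0:ℝ) t,
                ((∫ x in Set.Icc (0:ℝ) mmax, (1:ℝ) ∂(ξ₁ (u:ℝ)))
                  + ∫ x in Set.Icc (0:ℝ) mmax, (1:ℝ) ∂(ξ₂ (u:ℝ))))
              * (kg + 3 * klam) * ∫ u in (0:ℝ)..t, |S₁ u - S₂ u| := by
  intro t ht f hf hf₁ hf₂
  have := hsol₁.xi_fin
  have := hsol₂.xi_fin
  set C := ⨆ u : Set.Icc (0:ℝ) t, ((∫ x in Set.Icc (0:ℝ) mmax, (1:ℝ) ∂(ξ₁ (u:ℝ)))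
    + ∫ x in Set.Icc (0:ℝ) mmax, (1:ℝ) ∂(ξ₂ (u:ℝ)))
  have hpointwise : ∀ u ∈ Set.Ioc (0:ℝ) t,
      ‖popIntegrand mmax D rg lam Q f S₁ ξ₁ u - popIntegrand mmax D rg lam Q f S₂ ξ₂ u‖
        ≤ (gbar + 3 * lamBar + D) * tvNorm (ξ₁ u) (ξ₂ u) (hsol₁.xi_fin u) (hsol₂.xi_fin u)
          + C * (kg + 3 * klam) * |S₁ u - S₂ u| := fun u hu => by
    have hK : 0 ≤ kg + 3 * klam := by linarith [hyp.kg_nonneg, hyp.klam_nonneg]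
    refine (abs_popIntegrand_sub_popIntegrand_le hyp hf hf₁ hf₂ (hsol₁.S_nonneg u hu.1.le)
      (hsol₂.S_nonneg u hu.1.le)).trans ?_
    gcongr
    exact measureReal_Icc_le_iSup_masses hsol₁ hsol₂ (Set.Ioc_subset_Icc_self hu)
  have hS : IntervalIntegrable (fun u => |S₁ u - S₂ u|) volume 0 t :=
    (hsol₁.S_cont.sub hsol₂.S_cont).abs.intervalIntegrable 0 t
  have htv := intervalIntegrable_tvNorm hsol₁ hsol₂ ht
  rw [hsol₁.xi_eq f hf t ht, hsol₂.xi_eq f hf t ht, hxi0, add_sub_add_left_eq_sub,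
    ← intervalIntegral.integral_sub (hsol₁.xi_int f hf t ht) (hsol₂.xi_int f hf t ht)]
  refine (intervalIntegral.norm_integral_le_of_norm_le ht (ae_of_all _ hpointwise)
    ((htv.const_mul _).add (hS.const_mul _))).trans_eq ?_
  rw [intervalIntegral.integral_add (htv.const_mul _) (hS.const_mul _),
    intervalIntegral.integral_const_mul, intervalIntegral.integral_const_mul]
end
end

section
/- Let (S¹, ξ¹) and (S², ξ²) be two weak solutions of the limit chemostat system with S¹_0 = S²_0, and set C_t = sup_{0 ≤ u ≤ t} (⟨ξ¹_u, 1⟩ + ⟨ξ²_u, 1⟩). Then for every t ≥ 0, |S¹_t − S²_t| ≤ (D + (k/V)·C_t·k_g) ∫_0^t |S¹_u − S²_u| du + (k/V)·ḡ ∫_0^t ‖ξ¹_u − ξ²_u‖_TV du. -/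
open MeasureTheory Filter

noncomputable section

/-!
Subtracting the two substrate equations bounds `|S¹_t - S²_t|` by the time integral of the
difference of the integrands. In the consumption term we pass through `∫ ρ_g(S²_u, x) ξ¹_u(dx)`:
the Lipschitz bound on `ρ_g` in the substrate gives `k_g |S¹_u - S²_u| ⟨ξ¹_u, 1⟩`, and testing
`ρ_g ≤ ḡ` against the Jordan decomposition of `ξ¹_u - ξ²_u` gives `ḡ ‖ξ¹_u - ξ²_u‖_TV`.

The measure-theoretic point is that `u ↦ ‖ξ¹_u - ξ²_u‖_TV` is measurable, so that its integral is
not a junk value. Write `‖μ - ν‖_TV = 2 sup_E (μ E - ν E) - (μ X - ν X)`; by outer regularity the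
supremum may be taken over the countably many finite unions of basic open sets, and `u ↦ ξ_u(U)`
is measurable for open `U` because indicators of closed sets are pointwise limits of bounded
continuous functions.
-/

open Set TopologicalSpace
open scoped ENNReal NNReal BoundedContinuousFunction

section TotalVariation

variable {Ω : Type*} [MeasurableSpace Ω] (μ ν : Measure Ω)

lemma tvNorm_nonneg (hμ : IsFiniteMeasure μ) (hν : IsFiniteMeasure ν) :
    0 ≤ tvNorm μ ν hμ hν :=
  ENNReal.toReal_nonneg

variable [IsFiniteMeasure μ] [IsFiniteMeasure ν]

abbrev jordanSub : JordanDecomposition Ω :=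
  (μ.toSignedMeasure - ν.toSignedMeasure).toJordanDecomposition

lemma measureReal_sub_eq_jordanSub {E : Set Ω} (hE : MeasurableSet E) :
    μ.real E - ν.real E = (jordanSub μ ν).posPart.real E - (jordanSub μ ν).negPart.real E := by
  rw [← Measure.toSignedMeasure_sub_apply hE,
    SignedMeasure.apply_eq_posPart_real_sub_negPart_real _ hE]

lemma tvNorm_eq_jordanSub :
    tvNorm μ ν ‹_› ‹_› = (jordanSub μ ν).posPart.real univ + (jordanSub μ ν).negPart.real univ := by
  rw [tvNorm, ← measureReal_def, SignedMeasure.totalVariation, measureReal_add_apply]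

lemma isGreatest_jordanSub_posPart_real_univ :
    IsGreatest {r | ∃ E, MeasurableSet E ∧ μ.real E - ν.real E = r}
      ((jordanSub μ ν).posPart.real univ) := by
  refine ⟨?_, ?_⟩
  · obtain ⟨S, hS, -, -, hPS, hNS⟩ := (jordanSub μ ν).exists_compl_positive_negative
    refine ⟨Sᶜ, hS.compl, ?_⟩
    rw [measureReal_sub_eq_jordanSub μ ν hS.compl, measureReal_compl hS, measureReal_def _ Sᶜ,
      hNS, measureReal_def _ S, hPS]
    simp
  · rintro _ ⟨E, hE, rfl⟩
    rw [measureReal_sub_eq_jordanSub μ ν hE]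
    linarith [measureReal_nonneg (μ := (jordanSub μ ν).negPart) (s := E),
      measureReal_mono (μ := (jordanSub μ ν).posPart) (subset_univ E)]

lemma tvNorm_eq_two_mul_jordanSub_posPart_sub :
    tvNorm μ ν ‹_› ‹_› = 2 * (jordanSub μ ν).posPart.real univ - (μ.real univ - ν.real univ) := by
  rw [tvNorm_eq_jordanSub, measureReal_sub_eq_jordanSub μ ν MeasurableSet.univ]
  ring

lemma tvNorm_le_measureReal_univ_add :
    tvNorm μ ν ‹_› ‹_› ≤ μ.real univ + ν.real univ := by
  obtain ⟨E, -, hE⟩ := (isGreatest_jordanSub_posPart_real_univ μ ν).1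
  rw [tvNorm_eq_two_mul_jordanSub_posPart_sub, ← hE]
  linarith [measureReal_mono (μ := μ) (subset_univ E), measureReal_nonneg (μ := ν) (s := E)]

lemma add_jordanSub_negPart_eq : μ + (jordanSub μ ν).negPart = ν + (jordanSub μ ν).posPart := by
  rw [← Measure.toSignedMeasure_eq_toSignedMeasure_iff, Measure.toSignedMeasure_add,
    Measure.toSignedMeasure_add, add_comm ν.toSignedMeasure, ← sub_eq_sub_iff_add_eq_add]
  exact (SignedMeasure.toSignedMeasure_toJordanDecomposition _).symm

lemma abs_setIntegral_sub_le_mul_tvNorm {g : Ω → ℝ} (hg : Measurable g) {C : ℝ} (hC : 0 ≤ C)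
    {s : Set Ω} (hs : MeasurableSet s) (hgC : ∀ x ∈ s, |g x| ≤ C) :
    |(∫ x in s, g x ∂μ) - ∫ x in s, g x ∂ν| ≤ C * tvNorm μ ν ‹_› ‹_› := by
  have hint : ∀ (ρ : Measure Ω) [IsFiniteMeasure ρ], IntegrableOn g s ρ := fun ρ _ =>
    .of_bound (measure_lt_top ρ s) hg.aestronglyMeasurable C
      ((ae_restrict_iff' hs).2 (.of_forall hgC))
  have hbound : ∀ (ρ : Measure Ω) [IsFiniteMeasure ρ], |∫ x in s, g x ∂ρ| ≤ C * ρ.real univ :=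
    fun ρ _ => by
      have h := norm_setIntegral_le_of_norm_le_const (f := g) (measure_lt_top ρ s)
        (by simpa only [Real.norm_eq_abs] using hgC)
      rw [Real.norm_eq_abs] at h
      exact h.trans (mul_le_mul_of_nonneg_left (measureReal_mono (subset_univ s)) hC)
  set P := (jordanSub μ ν).posPart
  set N := (jordanSub μ ν).negPart
  have hsplit : (∫ x in s, g x ∂μ) - ∫ x in s, g x ∂ν = (∫ x in s, g x ∂P) - ∫ x in s, g x ∂N := by
    have h := congrArg (fun ρ => ∫ x in s, g x ∂ρ) (add_jordanSub_negPart_eq μ ν)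
    simp only [Measure.restrict_add] at h
    rw [integral_add_measure (hint μ) (hint N), integral_add_measure (hint ν) (hint P)] at h
    linarith
  rw [hsplit, tvNorm_eq_jordanSub]
  linarith [abs_sub (∫ x in s, g x ∂P) (∫ x in s, g x ∂N), hbound P, hbound N]

end TotalVariation

section BasisUnion

variable {X : Type*} [TopologicalSpace X] [SecondCountableTopology X]

def basisUnion (F : Finset (countableBasis X)) : Set X := ⋃ b ∈ F, (b : Set X)

lemma isOpen_basisUnion (F : Finset (countableBasis X)) : IsOpen (basisUnion F) :=
  isOpen_biUnion fun b _ => isOpen_of_mem_countableBasis b.2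

lemma basisUnion_union (F G : Finset (countableBasis X)) :
    basisUnion (F ∪ G) = basisUnion F ∪ basisUnion G :=
  Finset.set_biUnion_union F G _

lemma measure_eq_iSup_basisUnion [MeasurableSpace X] (μ : Measure X) {U : Set X}
    (hU : IsOpen U) :
    μ U = ⨆ F : {F : Finset (countableBasis X) // basisUnion F ⊆ U}, μ (basisUnion F.1) := by
  have hunion : (⋃ F : {F : Finset (countableBasis X) // basisUnion F ⊆ U}, basisUnion F.1)
      = U := by
    refine Subset.antisymm (iUnion_subset fun F => F.2) fun x hx => ?_
    obtain ⟨b, hb, hxb, hbU⟩ := (isBasis_countableBasis X).exists_subset_of_mem_open hx hU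
    exact mem_iUnion.2 ⟨⟨{⟨b, hb⟩}, by simpa [basisUnion] using hbU⟩,
      by simpa [basisUnion] using hxb⟩
  have hdir : Directed (· ⊆ ·)
      fun F : {F : Finset (countableBasis X) // basisUnion F ⊆ U} => basisUnion F.1 := by
    rintro ⟨F, hF⟩ ⟨G, hG⟩
    refine ⟨⟨F ∪ G, by simpa [basisUnion_union] using And.intro hF hG⟩, ?_, ?_⟩ <;>
      simp [basisUnion_union]
  rw [← hdir.measure_iUnion, hunion]

variable [PseudoMetrizableSpace X] [MeasurableSpace X] [BorelSpace X]

lemma exists_basisUnion_measureReal_sub_gt (μ ν : Measure X) [IsFiniteMeasure μ]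
    [IsFiniteMeasure ν] (E : Set X) {ε : ℝ} (hε : 0 < ε) :
    ∃ F, μ.real E - ν.real E - ε < μ.real (basisUnion F) - ν.real (basisUnion F) := by
  have hδ : ENNReal.ofReal (ε / 2) ≠ 0 := by simp [hε]
  obtain ⟨U, hEU, hU, hνU⟩ := E.exists_isOpen_lt_of_lt (μ := ν) _
    (ENNReal.lt_add_right (measure_ne_top ν E) hδ)
  have hμU : μ U < ⨆ F : {F : Finset (countableBasis X) // basisUnion F ⊆ U},
      (μ (basisUnion F.1) + ENNReal.ofReal (ε / 2)) := by
    have : Nonempty {F : Finset (countableBasis X) // basisUnion F ⊆ U} :=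
      ⟨⟨∅, by simp [basisUnion]⟩⟩
    rw [← ENNReal.iSup_add, ← measure_eq_iSup_basisUnion μ hU]
    exact ENNReal.lt_add_right (measure_ne_top μ U) hδ
  obtain ⟨⟨F, hFU⟩, hF⟩ := lt_iSup_iff.1 hμU
  have toReal_lt : ∀ {a b : ℝ≥0∞}, a ≠ ⊤ → b ≠ ⊤ → a < b + ENNReal.ofReal (ε / 2) →
      a.toReal < b.toReal + ε / 2 := fun ha hb h => by
    rwa [← ENNReal.toReal_ofReal (by positivity : 0 ≤ ε / 2), ← ENNReal.toReal_add hb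
      ENNReal.ofReal_ne_top, ENNReal.toReal_lt_toReal ha (by finiteness)]
  refine ⟨F, ?_⟩
  have h₁ := toReal_lt (measure_ne_top _ _) (measure_ne_top _ _) hF
  have h₂ := toReal_lt (measure_ne_top _ _) (measure_ne_top _ _) hνU
  simp only [← measureReal_def] at h₁ h₂
  linarith [measureReal_mono (μ := μ) hEU, measureReal_mono (μ := ν) hFU]

lemma jordanSub_posPart_real_univ_eq_iSup (μ ν : Measure X) [IsFiniteMeasure μ]
    [IsFiniteMeasure ν] :
    (jordanSub μ ν).posPart.real univ
      = ⨆ F, (μ.real (basisUnion F) - ν.real (basisUnion F)) := by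
  obtain ⟨⟨E, -, hE⟩, hmax⟩ := isGreatest_jordanSub_posPart_real_univ μ ν
  have hle : ∀ F, μ.real (basisUnion F) - ν.real (basisUnion F) ≤ _ := fun F =>
    hmax ⟨_, (isOpen_basisUnion F).measurableSet, rfl⟩
  refine le_antisymm (le_of_forall_pos_lt_add fun ε hε => ?_) (ciSup_le hle)
  obtain ⟨F, hF⟩ := exists_basisUnion_measureReal_sub_gt μ ν E hε
  have := le_ciSup ⟨_, forall_mem_range.2 hle⟩ F
  linarith

end BasisUnion

section Measurability

variable {α X : Type*} [MeasurableSpace α] [TopologicalSpace X] [MeasurableSpace X]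
  {ξ : α → Measure X} [∀ u, IsFiniteMeasure (ξ u)]

lemma measurable_measureReal_of_isClosed [OpensMeasurableSpace X] [HasOuterApproxClosed X]
    (hξ : ∀ g : X →ᵇ ℝ, Measurable fun u => ∫ x, g x ∂ξ u) {F : Set X} (hF : IsClosed F) :
    Measurable fun u => (ξ u).real F := by
  refine measurable_of_tendsto_metrizable
    (fun n => hξ ((hF.apprSeq n).comp _ NNReal.isometry_coe.lipschitz))
    (tendsto_pi_nhds.2 fun u => ?_)
  simp only [BoundedContinuousFunction.comp_apply,
    ← BoundedContinuousFunction.toReal_lintegral_coe_eq_integral]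
  exact (ENNReal.tendsto_toReal (measure_ne_top _ _)).comp
    (HasOuterApproxClosed.tendsto_lintegral_apprSeq hF (ξ u))

lemma measurable_measureReal_of_isOpen [OpensMeasurableSpace X] [HasOuterApproxClosed X]
    (hξ : ∀ g : X →ᵇ ℝ, Measurable fun u => ∫ x, g x ∂ξ u) {U : Set X} (hU : IsOpen U) :
    Measurable fun u => (ξ u).real U := by
  have hcompl : ∀ u, (ξ u).real U = (ξ u).real univ - (ξ u).real Uᶜ := fun u => by
    rw [← measureReal_compl hU.isClosed_compl.measurableSet, compl_compl]
  simp only [hcompl]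
  exact (measurable_measureReal_of_isClosed hξ isClosed_univ).sub
    (measurable_measureReal_of_isClosed hξ hU.isClosed_compl)

lemma measurable_tvNorm [PseudoMetrizableSpace X] [SecondCountableTopology X] [BorelSpace X]
    {ξ' : α → Measure X} [∀ u, IsFiniteMeasure (ξ' u)]
    (hξ : ∀ g : X →ᵇ ℝ, Measurable fun u => ∫ x, g x ∂ξ u)
    (hξ' : ∀ g : X →ᵇ ℝ, Measurable fun u => ∫ x, g x ∂ξ' u) :
    Measurable fun u => tvNorm (ξ u) (ξ' u) inferInstance inferInstance := by
  simp_rw [tvNorm_eq_two_mul_jordanSub_posPart_sub, jordanSub_posPart_real_univ_eq_iSup]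
  have hB := fun F => (measurable_measureReal_of_isOpen hξ (isOpen_basisUnion F)).sub
    (measurable_measureReal_of_isOpen hξ' (isOpen_basisUnion F))
  exact (measurable_const.mul (Measurable.iSup hB)).sub
    ((measurable_measureReal_of_isClosed hξ isClosed_univ).sub
      (measurable_measureReal_of_isClosed hξ' isClosed_univ))

end Measurability

lemma abs_sub_le_integral_of_eq_add_integral {f₁ f₂ g₁ g₂ h : ℝ → ℝ} {t : ℝ} (ht : 0 ≤ t)
    (hf₁ : f₁ t = f₁ 0 + ∫ u in (0:ℝ)..t, g₁ u) (hf₂ : f₂ t = f₂ 0 + ∫ u in (0:ℝ)..t, g₂ u)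
    (h0 : f₁ 0 = f₂ 0) (hg₁ : IntervalIntegrable g₁ volume 0 t)
    (hg₂ : IntervalIntegrable g₂ volume 0 t) (hh : IntervalIntegrable h volume 0 t)
    (hle : ∀ u ∈ Icc 0 t, |g₁ u - g₂ u| ≤ h u) :
    |f₁ t - f₂ t| ≤ ∫ u in (0:ℝ)..t, h u :=
  calc |f₁ t - f₂ t| = |∫ u in (0:ℝ)..t, (g₁ u - g₂ u)| := by
        rw [intervalIntegral.integral_sub hg₁ hg₂, hf₁, hf₂, h0, add_sub_add_left_eq_sub]
    _ ≤ ∫ u in (0:ℝ)..t, |g₁ u - g₂ u| := intervalIntegral.abs_integral_le_integral_abs ht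
    _ ≤ ∫ u in (0:ℝ)..t, h u := intervalIntegral.integral_mono_on ht (hg₁.sub hg₂).abs hh hle

namespace IsWeakSolution

variable {mmax D sIn k V : ℝ} {rg lam : ℝ → ℝ → ℝ} {Q : Measure ℝ} {S : ℝ → ℝ}
  {ξ : ℝ → Measure ℝ}

lemma restrict_Icc (hsol : IsWeakSolution mmax D sIn k V rg lam Q S ξ) (u : ℝ) :
    (ξ u).restrict (Icc 0 mmax) = ξ u :=
  Measure.restrict_eq_self_of_ae_mem (measure_mono_null (fun _ hx => hx) (hsol.xi_supp u))

lemma measurable_integral (hsol : IsWeakSolution mmax D sIn k V rg lam Q S ξ) (g : ℝ →ᵇ ℝ) :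
    Measurable fun u => ∫ x, g x ∂ξ u := by
  simpa only [hsol.restrict_Icc] using hsol.xi_meas g g.continuous

lemma setIntegral_one (hsol : IsWeakSolution mmax D sIn k V rg lam Q S ξ) (u : ℝ) :
    ∫ _ in Icc 0 mmax, (1:ℝ) ∂ξ u = (ξ u).real univ := by
  rw [hsol.restrict_Icc, integral_const, smul_eq_mul, mul_one]

lemma exists_measureReal_univ_le (hsol : IsWeakSolution mmax D sIn k V rg lam Q S ξ) (T : ℝ) :
    ∃ C, ∀ u ∈ Icc 0 T, (ξ u).real univ ≤ C := by
  obtain ⟨C, hC⟩ := hsol.xi_locbdd (fun _ => 1) continuous_const T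
  exact ⟨C, fun u hu => hsol.setIntegral_one u ▸ (le_abs_self _).trans (hC u hu)⟩

variable {S' : ℝ → ℝ} {ξ' : ℝ → Measure ℝ}

lemma measureReal_univ_le_iSup (hsol : IsWeakSolution mmax D sIn k V rg lam Q S ξ)
    (hsol' : IsWeakSolution mmax D sIn k V rg lam Q S' ξ') {t u : ℝ} (hu : u ∈ Icc 0 t) :
    (ξ u).real univ ≤ ⨆ v : Icc (0:ℝ) t, ((ξ v).real univ + (ξ' v).real univ) := by
  obtain ⟨C, hC⟩ := hsol.exists_measureReal_univ_le t
  obtain ⟨C', hC'⟩ := hsol'.exists_measureReal_univ_le t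
  have hbdd : BddAbove (range fun v : Icc (0:ℝ) t => (ξ v).real univ + (ξ' v).real univ) :=
    ⟨C + C', forall_mem_range.2 fun v => add_le_add (hC v v.2) (hC' v v.2)⟩
  have := hsol'.xi_fin u
  exact (le_add_of_nonneg_right measureReal_nonneg).trans (le_ciSup hbdd ⟨u, hu⟩)

lemma intervalIntegrable_tvNorm (hsol : IsWeakSolution mmax D sIn k V rg lam Q S ξ)
    (hsol' : IsWeakSolution mmax D sIn k V rg lam Q S' ξ') {t : ℝ} (ht : 0 ≤ t) :
    IntervalIntegrable (fun u => tvNorm (ξ u) (ξ' u) (hsol.xi_fin u) (hsol'.xi_fin u))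
      volume 0 t := by
  have := hsol.xi_fin
  have := hsol'.xi_fin
  obtain ⟨C, hC⟩ := hsol.exists_measureReal_univ_le t
  obtain ⟨C', hC'⟩ := hsol'.exists_measureReal_univ_le t
  refine (intervalIntegrable_const (c := C + C')).mono_fun'
    (measurable_tvNorm hsol.measurable_integral hsol'.measurable_integral).aestronglyMeasurable
    ((ae_restrict_iff' measurableSet_uIoc).2 (.of_forall fun u hu => ?_))
  rw [uIoc_of_le ht] at hu
  dsimp only
  rw [Real.norm_eq_abs, abs_of_nonneg (tvNorm_nonneg _ _ _ _)]
  exact (tvNorm_le_measureReal_univ_add _ _).trans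
    (add_le_add (hC u (Ioc_subset_Icc_self hu)) (hC' u (Ioc_subset_Icc_self hu)))

end IsWeakSolution

namespace ChemostatHyps

variable {mmax D sIn k V gbar lamBar kg klam : ℝ} {rg lam : ℝ → ℝ → ℝ} {Q : Measure ℝ}

lemma abs_setIntegral_growth_sub_le
    (hyp : ChemostatHyps mmax D sIn k V gbar lamBar kg klam rg lam Q)
    (μ ν : Measure ℝ) [IsFiniteMeasure μ] [IsFiniteMeasure ν] {s₁ s₂ : ℝ} (hs₁ : 0 ≤ s₁)
    (hs₂ : 0 ≤ s₂) :
    |(∫ x in Icc 0 mmax, rg s₁ x ∂μ) - ∫ x in Icc 0 mmax, rg s₂ x ∂ν|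
      ≤ kg * |s₁ - s₂| * μ.real univ + gbar * tvNorm μ ν ‹_› ‹_› := by
  have hbound : ∀ s, 0 ≤ s → ∀ x ∈ Icc 0 mmax, |rg s x| ≤ gbar := fun s hs x hx =>
    abs_le.2 ⟨by linarith [hyp.rg_nonneg s hs x hx, hyp.gbar_pos], hyp.rg_le s hs x hx⟩
  have hint : ∀ s, 0 ≤ s → IntegrableOn (rg s) (Icc 0 mmax) μ := fun s hs =>
    .of_bound (measure_lt_top μ _) (hyp.rg_meas s).aestronglyMeasurable gbar
      ((ae_restrict_iff' measurableSet_Icc).2 (.of_forall (hbound s hs)))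
  have hlip : |(∫ x in Icc 0 mmax, rg s₁ x ∂μ) - ∫ x in Icc 0 mmax, rg s₂ x ∂μ|
      ≤ kg * |s₁ - s₂| * μ.real univ := by
    rw [← integral_sub (hint s₁ hs₁) (hint s₂ hs₂)]
    have h := norm_setIntegral_le_of_norm_le_const (f := fun x => rg s₁ x - rg s₂ x)
      (measure_lt_top μ (Icc 0 mmax))
      fun x hx => (Real.norm_eq_abs _).trans_le (hyp.rg_lip s₁ s₂ hs₁ hs₂ x hx)
    rw [Real.norm_eq_abs] at h
    refine h.trans ?_
    exact mul_le_mul_of_nonneg_left (measureReal_mono (subset_univ _))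
      (mul_nonneg hyp.kg_nonneg (abs_nonneg _))
  have htv := abs_setIntegral_sub_le_mul_tvNorm μ ν (hyp.rg_meas s₂) hyp.gbar_pos.le
    measurableSet_Icc (hbound s₂ hs₂)
  linarith [abs_sub_le (∫ x in Icc 0 mmax, rg s₁ x ∂μ) (∫ x in Icc 0 mmax, rg s₂ x ∂μ)
    (∫ x in Icc 0 mmax, rg s₂ x ∂ν)]

lemma abs_subIntegrand_sub_le (hyp : ChemostatHyps mmax D sIn k V gbar lamBar kg klam rg lam Q)
    {S₁ S₂ : ℝ → ℝ} {ξ₁ ξ₂ : ℝ → Measure ℝ} {u : ℝ} [IsFiniteMeasure (ξ₁ u)]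
    [IsFiniteMeasure (ξ₂ u)] (hS₁ : 0 ≤ S₁ u) (hS₂ : 0 ≤ S₂ u) {M : ℝ}
    (hM : (ξ₁ u).real univ ≤ M) :
    |subIntegrand mmax D sIn k V rg S₁ ξ₁ u - subIntegrand mmax D sIn k V rg S₂ ξ₂ u|
      ≤ (D + k / V * M * kg) * |S₁ u - S₂ u| + k / V * gbar * tvNorm (ξ₁ u) (ξ₂ u) ‹_› ‹_› := by
  have hkV : 0 < k / V := div_pos hyp.k_pos hyp.V_pos
  have hgrowth := hyp.abs_setIntegral_growth_sub_le (ξ₁ u) (ξ₂ u) hS₁ hS₂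
  have hmass : kg * |S₁ u - S₂ u| * (ξ₁ u).real univ ≤ kg * |S₁ u - S₂ u| * M :=
    mul_le_mul_of_nonneg_left hM (mul_nonneg hyp.kg_nonneg (abs_nonneg _))
  calc |subIntegrand mmax D sIn k V rg S₁ ξ₁ u - subIntegrand mmax D sIn k V rg S₂ ξ₂ u|
      = |D * (S₂ u - S₁ u) - k / V * ((∫ x in Icc 0 mmax, rg (S₁ u) x ∂ξ₁ u)
          - ∫ x in Icc 0 mmax, rg (S₂ u) x ∂ξ₂ u)| := by
        congr 1; unfold subIntegrand; ring
    _ ≤ D * |S₁ u - S₂ u| + k / V * (kg * |S₁ u - S₂ u| * M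
          + gbar * tvNorm (ξ₁ u) (ξ₂ u) ‹_› ‹_›) := by
        refine (abs_sub _ _).trans (add_le_add ?_ ?_)
        · rw [abs_mul, abs_of_pos hyp.D_pos, abs_sub_comm]
        · rw [abs_mul, abs_of_pos hkV]
          exact mul_le_mul_of_nonneg_left (by linarith) hkV.le
    _ = _ := by ring

end ChemostatHyps

/-- For two weak solutions `(S¹, ξ¹)`, `(S², ξ²)` of the limit chemostat
system with the same initial substrate concentration `S¹_0 = S²_0`, setting
`C_t = sup_{0 ≤ u ≤ t} (⟨ξ¹_u, 1⟩ + ⟨ξ²_u, 1⟩)`, for every `t ≥ 0`: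
`|S¹_t − S²_t| ≤ (D + (k/V) C_t k_g) ∫_0^t |S¹_u − S²_u| du
   + (k/V) ḡ ∫_0^t ‖ξ¹_u − ξ²_u‖_TV du`. -/
theorem weak_solutions_substrate_estimate
    (mmax D sIn k V gbar lamBar kg klam : ℝ)
    (rg lam : ℝ → ℝ → ℝ) (Q : Measure ℝ)
    (hyp : ChemostatHyps mmax D sIn k V gbar lamBar kg klam rg lam Q)
    (S₁ S₂ : ℝ → ℝ) (ξ₁ ξ₂ : ℝ → Measure ℝ)
    (hsol₁ : IsWeakSolution mmax D sIn k V rg lam Q S₁ ξ₁)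
    (hsol₂ : IsWeakSolution mmax D sIn k V rg lam Q S₂ ξ₂)
    (hS0 : S₁ 0 = S₂ 0) :
    ∀ t, 0 ≤ t →
      |S₁ t - S₂ t|
        ≤ (D + (k / V)
                * (⨆ u : Set.Icc (0:ℝ) t,
                    ((∫ x in Set.Icc (0:ℝ) mmax, (1:ℝ) ∂(ξ₁ (u:ℝ)))
                      + ∫ x in Set.Icc (0:ℝ) mmax, (1:ℝ) ∂(ξ₂ (u:ℝ))))
                * kg) * (∫ u in (0:ℝ)..t, |S₁ u - S₂ u|)
          + (k / V) * gbar
              * ∫ u in (0:ℝ)..t, tvNorm (ξ₁ u) (ξ₂ u) (hsol₁.xi_fin u) (hsol₂.xi_fin u) := by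
  intro t ht
  have := hsol₁.xi_fin
  have := hsol₂.xi_fin
  have hdist : IntervalIntegrable (fun u => |S₁ u - S₂ u|) volume 0 t :=
    (hsol₁.S_cont.sub hsol₂.S_cont).abs.intervalIntegrable 0 t
  have htv := hsol₁.intervalIntegrable_tvNorm hsol₂ ht
  simp only [hsol₁.setIntegral_one, hsol₂.setIntegral_one]
  refine (abs_sub_le_integral_of_eq_add_integral ht (hsol₁.S_eq t ht) (hsol₂.S_eq t ht) hS0
    (hsol₁.S_int t ht) (hsol₂.S_int t ht) ((hdist.const_mul _).add (htv.const_mul _))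
    fun u hu => hyp.abs_subIntegrand_sub_le (hsol₁.S_nonneg u hu.1) (hsol₂.S_nonneg u hu.1)
      (hsol₁.measureReal_univ_le_iSup hsol₂ hu)).trans_eq ?_
  rw [intervalIntegral.integral_add (hdist.const_mul _) (htv.const_mul _),
    intervalIntegral.integral_const_mul, intervalIntegral.integral_const_mul]
end
end

section
/- Let ν : [0,∞) → M_F(X) be such that u ↦ ∫_X ρ_g(s,x) ν_u(dx) is Borel measurable for each s ≥ 0 and u ↦ ν_u(X) is locally bounded. Let S : [0,∞) → ℝ be continuous with S_0 ≥ 0 and S_t = S_0 + ∫_0^t [D(s_in − S_u) − (k/V)∫_X ρ_g(S_u, x) ν_u(dx)] du for all t ≥ 0. Then 0 ≤ S_t ≤ max(S_0, s_in) for every t ≥ 0 (the substrate concentration remains nonnegative and bounded by the maximum of its initial value and the input concentration). -/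
/-!
Both bounds are barrier arguments for the integral equation. If `S` had crossed the level, take
the last time before `t` at which it was still on the allowed side; from then on the integrand
pushes `S` back (below `0` the growth term vanishes and dilution is positive, above
`max (S 0) sIn` dilution and consumption are both nonpositive), so the integral from then to `t` has
the wrong sign.
-/

open MeasureTheory Set

theorem lower_bound_of_eq_add_integral {S f : ℝ → ℝ} {a b c : ℝ} (hab : a ≤ b)
    (hS : ContinuousOn S (Icc a b)) (hf_int : IntervalIntegrable f volume a b)
    (hS_eq : ∀ s ∈ Icc a b, S s = S a + ∫ u in a..s, f u)
    (hf : ∀ u ∈ Ioc a b, S u < c → 0 ≤ f u) (ha : c ≤ S a) : c ≤ S b := by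
  by_contra! hb
  set E := Icc a b ∩ S ⁻¹' Ici c
  have hE_closed : IsClosed E := hS.preimage_isClosed_of_isClosed isClosed_Icc isClosed_Ici
  have hE_bdd : BddAbove E := ⟨b, fun u hu => hu.1.2⟩
  obtain ⟨⟨har, hrb⟩, hr⟩ : sSup E ∈ E :=
    hE_closed.csSup_mem ⟨a, ⟨left_mem_Icc.2 hab, ha⟩⟩ hE_bdd
  set r := sSup E
  have hrb' : r < b := hrb.lt_of_ne fun h => (h ▸ hr : c ≤ S b).not_gt hb
  have hbelow : ∀ u ∈ Ioc r b, S u < c := fun u hu => by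
    by_contra! hcu
    exact (le_csSup hE_bdd ⟨⟨har.trans hu.1.le, hu.2⟩, hcu⟩).not_gt hu.1
  have hincr : 0 ≤ ∫ u in r..b, f u := by
    rw [intervalIntegral.integral_of_le hrb'.le]
    exact setIntegral_nonneg measurableSet_Ioc fun u hu =>
      hf u ⟨har.trans_lt hu.1, hu.2⟩ (hbelow u hu)
  have hdiff : S b - S r = ∫ u in r..b, f u := by
    rw [hS_eq b (right_mem_Icc.2 hab), hS_eq r ⟨har, hrb⟩,
      ← intervalIntegral.integral_interval_sub_left hf_int
        (hf_int.mono_set (uIcc_subset_uIcc_left (mem_uIcc_of_le har hrb)))]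
    ring
  have hcr : c ≤ S r := hr
  linarith

theorem upper_bound_of_eq_add_integral {S f : ℝ → ℝ} {a b c : ℝ} (hab : a ≤ b)
    (hS : ContinuousOn S (Icc a b)) (hf_int : IntervalIntegrable f volume a b)
    (hS_eq : ∀ s ∈ Icc a b, S s = S a + ∫ u in a..s, f u)
    (hf : ∀ u ∈ Ioc a b, c < S u → f u ≤ 0) (ha : S a ≤ c) : S b ≤ c := by
  have h := lower_bound_of_eq_add_integral (S := -S) (f := -f) (c := -c) hab hS.neg hf_int.neg
    (fun s hs => by simp only [Pi.neg_apply, intervalIntegral.integral_neg, hS_eq s hs]; ring)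
    (fun u hu hlt => neg_nonneg.2 (hf u hu (neg_lt_neg_iff.1 hlt))) (neg_le_neg ha)
  exact neg_le_neg_iff.1 h

theorem substrate_nonneg_and_bounded_general
    (mmax D sIn k V : ℝ)
    (hD : 0 < D) (hsIn : 0 < sIn) (hk : 0 < k) (hV : 0 < V)
    (rg : ℝ → ℝ → ℝ)
    (hrg_nonneg : ∀ s, 0 ≤ s → ∀ x ∈ Set.Icc (0:ℝ) mmax, 0 ≤ rg s x)
    (hrg_zero : ∀ x ∈ Set.Icc (0:ℝ) mmax, rg 0 x = 0)
    -- `ρ_g` is extended to negative substrate concentrations by `ρ_g(s,x) = ρ_g(max(s,0),x)`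
    (hrg_ext : ∀ s x, rg s x = rg (max s 0) x)
    (ν : ℝ → Measure ℝ)
    (S : ℝ → ℝ) (hS_cont : Continuous S) (hS0 : 0 ≤ S 0)
    (hS_int : ∀ t, 0 ≤ t → IntervalIntegrable
      (fun u => D * (sIn - S u) - (k / V) * ∫ x in Set.Icc (0:ℝ) mmax, rg (S u) x ∂(ν u))
      volume 0 t)
    (hS_eq : ∀ t, 0 ≤ t → S t = S 0 + ∫ u in (0:ℝ)..t,
      (D * (sIn - S u) - (k / V) * ∫ x in Set.Icc (0:ℝ) mmax, rg (S u) x ∂(ν u))) :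
    ∀ t, 0 ≤ t → 0 ≤ S t ∧ S t ≤ max (S 0) sIn := by
  intro t ht
  have hgrowth_nonneg : ∀ u, 0 ≤ ∫ x in Icc (0:ℝ) mmax, rg (S u) x ∂(ν u) := fun u =>
    setIntegral_nonneg measurableSet_Icc fun x hx =>
      hrg_ext (S u) x ▸ hrg_nonneg _ (le_max_right _ _) x hx
  have hgrowth_zero : ∀ u, S u < 0 → ∫ x in Icc (0:ℝ) mmax, rg (S u) x ∂(ν u) = 0 :=
    fun u hu => setIntegral_eq_zero_of_forall_eq_zero fun x hx => by
      rw [hrg_ext, max_eq_right hu.le, hrg_zero x hx]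
  have hS_eq' := fun s (hs : s ∈ Icc 0 t) => hS_eq s hs.1
  constructor
  · refine lower_bound_of_eq_add_integral ht hS_cont.continuousOn (hS_int t ht) hS_eq'
      (fun u _ hu => ?_) hS0
    rw [hgrowth_zero u hu, mul_zero, sub_zero]
    exact mul_nonneg hD.le (by linarith)
  · refine upper_bound_of_eq_add_integral ht hS_cont.continuousOn (hS_int t ht) hS_eq'
      (fun u _ hu => ?_) (le_max_left _ _)
    have hdilution : D * (sIn - S u) ≤ 0 :=
      mul_nonpos_of_nonneg_of_nonpos hD.le (by linarith [le_max_right (S 0) sIn])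
    linarith [mul_nonneg (div_pos hk hV).le (hgrowth_nonneg u)]

/-- If the substrate concentration `S` is continuous, starts from
`S_0 ≥ 0` and satisfies
`S_t = S_0 + ∫_0^t [D (s_in − S_u) − (k/V) ∫_X ρ_g(S_u, x) ν_u(dx)] du` for all `t ≥ 0`,
where `u ↦ ∫_X ρ_g(s,x) ν_u(dx)` is Borel measurable for each `s ≥ 0` and `u ↦ ν_u(X)` is
locally bounded, then `0 ≤ S_t ≤ max(S_0, s_in)` for every `t ≥ 0`. -/
theorem substrate_nonneg_and_bounded
    (mmax D sIn k V gbar kg : ℝ)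
    (hmmax : 0 < mmax) (hD : 0 < D) (hsIn : 0 < sIn) (hk : 0 < k) (hV : 0 < V)
    (hgbar : 0 < gbar) (hkg : 0 ≤ kg)
    (rg : ℝ → ℝ → ℝ)
    (hrg_meas : ∀ s : ℝ, Measurable (rg s))
    (hrg_nonneg : ∀ s, 0 ≤ s → ∀ x ∈ Set.Icc (0:ℝ) mmax, 0 ≤ rg s x)
    (hrg_le : ∀ s, 0 ≤ s → ∀ x ∈ Set.Icc (0:ℝ) mmax, rg s x ≤ gbar)
    (hrg_lip : ∀ s₁ s₂, 0 ≤ s₁ → 0 ≤ s₂ → ∀ x ∈ Set.Icc (0:ℝ) mmax,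
      |rg s₁ x - rg s₂ x| ≤ kg * |s₁ - s₂|)
    (hrg_zero : ∀ x ∈ Set.Icc (0:ℝ) mmax, rg 0 x = 0)
    (hrg_mmax : ∀ s, 0 ≤ s → rg s mmax = 0)
    -- `ρ_g` is extended to negative substrate concentrations by `ρ_g(s,x) = ρ_g(max(s,0),x)`
    (hrg_ext : ∀ s x, rg s x = rg (max s 0) x)
    (ν : ℝ → Measure ℝ) (hfin : ∀ u, IsFiniteMeasure (ν u))
    (hmeas : ∀ s, 0 ≤ s →
      Measurable fun u => ∫ x in Set.Icc (0:ℝ) mmax, rg s x ∂(ν u))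
    (hlocbdd : ∀ T : ℝ, ∃ C : ℝ, ∀ u ∈ Set.Icc (0:ℝ) T,
      ((ν u) (Set.Icc (0:ℝ) mmax)).toReal ≤ C)
    (S : ℝ → ℝ) (hS_cont : Continuous S) (hS0 : 0 ≤ S 0)
    (hS_int : ∀ t, 0 ≤ t → IntervalIntegrable
      (fun u => D * (sIn - S u) - (k / V) * ∫ x in Set.Icc (0:ℝ) mmax, rg (S u) x ∂(ν u))
      volume 0 t)
    (hS_eq : ∀ t, 0 ≤ t → S t = S 0 + ∫ u in (0:ℝ)..t,
      (D * (sIn - S u) - (k / V) * ∫ x in Set.Icc (0:ℝ) mmax, rg (S u) x ∂(ν u))) :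
    ∀ t, 0 ≤ t → 0 ≤ S t ∧ S t ≤ max (S 0) sIn :=
  substrate_nonneg_and_bounded_general mmax D sIn k V hD hsIn hk hV rg hrg_nonneg hrg_zero hrg_ext ν
    S hS_cont hS0 hS_int hS_eq
end

section
/- Define ρ_s(s, ν) = D(s_in − s) − (k/V)∫_X ρ_g(s,x) ν(dx) for s ≥ 0 and ν ∈ M_F(X). Let ν : [0,∞) → M_F(X) be such that u ↦ ∫_X ρ_g(s,x) ν_u(dx) is Borel measurable for each s ≥ 0 and u ↦ ν_u(X) is locally bounded, and let S : [0,∞) → ℝ be continuous with S_0 ≥ 0 and S_t = S_0 + ∫_0^t ρ_s(S_u, ν_u) du for all t ≥ 0. Then for every u ≥ 0 one has ρ_s(S_u, ν_u) ≤ D·s_in and ρ_s(S_u, ν_u) ≥ −D·max(S_0, s_in) − (k/V)·ḡ·ν_u(X), and consequently for every t ≥ 0, ∫_0^t |ρ_s(S_u, ν_u)| du ≤ D·t·max(S_0, s_in) + (k/V)·ḡ·∫_0^t ν_u(X) du. -/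
/-!
The substrate concentration is trapped in `[0, max(S_0, s_in)]`: below `0` the consumption term
vanishes and `ρ_s = D (s_in − S) > 0`, while above `max(S_0, s_in)` one has `ρ_s ≤ D (s_in − S) ≤ 0`,
so `S = S_0 + ∫ ρ_s` can cross neither barrier. On that interval `0 ≤ ∫_X ρ_g ≤ ḡ ν(X)` gives both
pointwise bounds on `ρ_s`, hence `|ρ_s(S_u, ν_u)| ≤ D max(S_0, s_in) + (k/V) ḡ ν_u(X)`, which is
integrated over `[0, t]`.
-/

open MeasureTheory Filter

noncomputable section

/-- `ρ_s(s, ν) = D (s_in − s) − (k/V) ∫_X ρ_g(s, x) ν(dx)` with `X = [0, mmax]`. -/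
def rhoS (mmax D sIn k V : ℝ) (rg : ℝ → ℝ → ℝ) (s : ℝ) (ν : Measure ℝ) : ℝ :=
  D * (sIn - s) - (k / V) * ∫ x in Set.Icc (0:ℝ) mmax, rg s x ∂ν

open Set intervalIntegral

section Barrier

variable {S g : ℝ → ℝ} {L t : ℝ}

theorem le_of_eq_add_integral_of_nonneg_below (hS : Continuous S)
    (hg : ∀ t, 0 ≤ t → IntervalIntegrable g volume 0 t)
    (hSg : ∀ t, 0 ≤ t → S t = S 0 + ∫ u in (0:ℝ)..t, g u)
    (hg_nonneg : ∀ u, 0 ≤ u → S u < L → 0 ≤ g u) (h0 : L ≤ S 0) (ht : 0 ≤ t) :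
    L ≤ S t := by
  by_contra! hlt
  set A := Icc 0 t ∩ S ⁻¹' Ici L
  have hA_closed : IsClosed A := isClosed_Icc.inter (isClosed_Ici.preimage hS)
  have hA_bdd : BddAbove A := bddAbove_Icc.mono inter_subset_left
  obtain ⟨⟨ht₀_nonneg, ht₀_le⟩, hL_le : L ≤ S (sSup A)⟩ : sSup A ∈ A :=
    hA_closed.csSup_mem ⟨0, ⟨le_rfl, ht⟩, h0⟩ hA_bdd
  -- `t₀` is the last time in `[0, t]` at which `S ≥ L`; after it `g ≥ 0`, so `S` cannot decrease.
  set t₀ := sSup A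
  have hbelow : ∀ u ∈ Ioc t₀ t, S u < L := fun u hu => by
    by_contra! h
    exact (le_csSup hA_bdd ⟨⟨ht₀_nonneg.trans hu.1.le, hu.2⟩, h⟩).not_gt hu.1
  have hincr : 0 ≤ ∫ u in t₀..t, g u := by
    rw [integral_of_le ht₀_le]
    exact setIntegral_nonneg measurableSet_Ioc fun u hu =>
      hg_nonneg u (ht₀_nonneg.trans hu.1.le) (hbelow u hu)
  have hdiff : S t - S t₀ = ∫ u in t₀..t, g u := by
    rw [hSg t ht, hSg t₀ ht₀_nonneg, ← integral_interval_sub_left (hg t ht) (hg t₀ ht₀_nonneg)]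
    ring
  linarith

theorem le_of_eq_add_integral_of_nonpos_above (hS : Continuous S)
    (hg : ∀ t, 0 ≤ t → IntervalIntegrable g volume 0 t)
    (hSg : ∀ t, 0 ≤ t → S t = S 0 + ∫ u in (0:ℝ)..t, g u)
    (hg_nonpos : ∀ u, 0 ≤ u → L < S u → g u ≤ 0) (h0 : S 0 ≤ L) (ht : 0 ≤ t) :
    S t ≤ L := by
  have key := le_of_eq_add_integral_of_nonneg_below (S := -S) (g := -g) (L := -L) hS.neg
    (fun t ht => (hg t ht).neg)
    (fun t ht => by simp only [Pi.neg_apply, hSg t ht, intervalIntegral.integral_neg]; ring)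
    (fun u hu hlt => neg_nonneg.mpr (hg_nonpos u hu (neg_lt_neg_iff.mp hlt)))
    (neg_le_neg h0) ht
  exact neg_le_neg_iff.mp key

end Barrier

theorem integral_abs_le_of_abs_le {f m : ℝ → ℝ} {a c t : ℝ} (ht : 0 ≤ t)
    (hf : IntervalIntegrable f volume 0 t) (hm : IntervalIntegrable m volume 0 t)
    (hfm : ∀ u ∈ Icc 0 t, |f u| ≤ a + c * m u) :
    ∫ u in (0:ℝ)..t, |f u| ≤ a * t + c * ∫ u in (0:ℝ)..t, m u := by
  calc ∫ u in (0:ℝ)..t, |f u|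
      ≤ ∫ u in (0:ℝ)..t, (a + c * m u) :=
        integral_mono_on ht hf.abs (intervalIntegrable_const.add (hm.const_mul c)) hfm
    _ = a * t + c * ∫ u in (0:ℝ)..t, m u := by
        rw [integral_add intervalIntegrable_const (hm.const_mul c), intervalIntegral.integral_const,
          intervalIntegral.integral_const_mul, smul_eq_mul, sub_zero, mul_comm]

theorem intervalIntegrable_of_norm_le_const {f : ℝ → ℝ} {a b C : ℝ} (hf : Measurable f)
    (hab : a ≤ b) (hbdd : ∀ u ∈ Icc a b, ‖f u‖ ≤ C) : IntervalIntegrable f volume a b := by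
  rw [intervalIntegrable_iff_integrableOn_Icc_of_le hab]
  exact Measure.integrableOn_of_bounded measure_Icc_lt_top.ne hf.aestronglyMeasurable
    (ae_restrict_of_forall_mem measurableSet_Icc hbdd)

section Chemostat

variable {mmax D sIn k V gbar s : ℝ} {rg : ℝ → ℝ → ℝ} {ν : Measure ℝ}

theorem setIntegral_rg_nonneg (hrg_nonneg : ∀ s, 0 ≤ s → ∀ x ∈ Icc (0:ℝ) mmax, 0 ≤ rg s x)
    (hs : 0 ≤ s) : 0 ≤ ∫ x in Icc (0:ℝ) mmax, rg s x ∂ν :=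
  setIntegral_nonneg measurableSet_Icc (hrg_nonneg s hs)

theorem setIntegral_rg_le [IsFiniteMeasure ν]
    (hrg_nonneg : ∀ s, 0 ≤ s → ∀ x ∈ Icc (0:ℝ) mmax, 0 ≤ rg s x)
    (hrg_le : ∀ s, 0 ≤ s → ∀ x ∈ Icc (0:ℝ) mmax, rg s x ≤ gbar) (hs : 0 ≤ s) :
    ∫ x in Icc (0:ℝ) mmax, rg s x ∂ν ≤ gbar * ν.real (Icc 0 mmax) := by
  refine (Real.le_norm_self _).trans (norm_setIntegral_le_of_norm_le_const (measure_lt_top _ _) ?_)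
  intro x hx
  rw [Real.norm_eq_abs, abs_of_nonneg (hrg_nonneg s hs x hx)]
  exact hrg_le s hs x hx

theorem setIntegral_rg_of_nonpos (hrg_zero : ∀ x ∈ Icc (0:ℝ) mmax, rg 0 x = 0)
    (hrg_ext : ∀ s x, rg s x = rg (max s 0) x) (hs : s ≤ 0) :
    ∫ x in Icc (0:ℝ) mmax, rg s x ∂ν = 0 := by
  refine setIntegral_eq_zero_of_forall_eq_zero fun x hx => ?_
  rw [hrg_ext, max_eq_right hs, hrg_zero x hx]

theorem rhoS_of_nonpos (hrg_zero : ∀ x ∈ Icc (0:ℝ) mmax, rg 0 x = 0)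
    (hrg_ext : ∀ s x, rg s x = rg (max s 0) x) (hs : s ≤ 0) :
    rhoS mmax D sIn k V rg s ν = D * (sIn - s) := by
  rw [rhoS, setIntegral_rg_of_nonpos hrg_zero hrg_ext hs, mul_zero, sub_zero]

theorem rhoS_le_of_nonneg (hkV : 0 ≤ k / V)
    (hrg_nonneg : ∀ s, 0 ≤ s → ∀ x ∈ Icc (0:ℝ) mmax, 0 ≤ rg s x) (hs : 0 ≤ s) :
    rhoS mmax D sIn k V rg s ν ≤ D * (sIn - s) :=
  sub_le_self _ (mul_nonneg hkV (setIntegral_rg_nonneg hrg_nonneg hs))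

theorem rhoS_le (hD : 0 ≤ D) (hkV : 0 ≤ k / V)
    (hrg_nonneg : ∀ s, 0 ≤ s → ∀ x ∈ Icc (0:ℝ) mmax, 0 ≤ rg s x) (hs : 0 ≤ s) :
    rhoS mmax D sIn k V rg s ν ≤ D * sIn :=
  (rhoS_le_of_nonneg hkV hrg_nonneg hs).trans (mul_le_mul_of_nonneg_left (by linarith) hD)

theorem neg_le_rhoS [IsFiniteMeasure ν] {M : ℝ} (hD : 0 ≤ D) (hsIn : 0 ≤ sIn) (hkV : 0 ≤ k / V)
    (hrg_nonneg : ∀ s, 0 ≤ s → ∀ x ∈ Icc (0:ℝ) mmax, 0 ≤ rg s x)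
    (hrg_le : ∀ s, 0 ≤ s → ∀ x ∈ Icc (0:ℝ) mmax, rg s x ≤ gbar) (hs : 0 ≤ s) (hsM : s ≤ M) :
    -(D * M) - k / V * gbar * ν.real (Icc 0 mmax) ≤ rhoS mmax D sIn k V rg s ν := by
  have hint := mul_le_mul_of_nonneg_left (setIntegral_rg_le (ν := ν) hrg_nonneg hrg_le hs) hkV
  have hlin : -(D * M) ≤ D * (sIn - s) := by nlinarith
  rw [rhoS]
  linarith

theorem abs_rhoS_le [IsFiniteMeasure ν] {M : ℝ} (hD : 0 ≤ D) (hsIn : 0 ≤ sIn) (hsInM : sIn ≤ M)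
    (hkV : 0 ≤ k / V) (hgbar : 0 ≤ gbar)
    (hrg_nonneg : ∀ s, 0 ≤ s → ∀ x ∈ Icc (0:ℝ) mmax, 0 ≤ rg s x)
    (hrg_le : ∀ s, 0 ≤ s → ∀ x ∈ Icc (0:ℝ) mmax, rg s x ≤ gbar) (hs : 0 ≤ s) (hsM : s ≤ M) :
    |rhoS mmax D sIn k V rg s ν| ≤ D * M + k / V * gbar * ν.real (Icc 0 mmax) := by
  have hup := rhoS_le (ν := ν) (sIn := sIn) hD hkV hrg_nonneg hs
  have hlow := neg_le_rhoS (ν := ν) hD hsIn hkV hrg_nonneg hrg_le hs hsM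
  have hmass : 0 ≤ k / V * gbar * ν.real (Icc 0 mmax) := by positivity
  have hsIn_le : D * sIn ≤ D * M := mul_le_mul_of_nonneg_left hsInM hD
  rw [abs_le]
  constructor <;> linarith

end Chemostat

theorem rhoS_bounds_general
    (mmax D sIn k V gbar : ℝ)
    (hD : 0 < D) (hsIn : 0 < sIn) (hk : 0 < k) (hV : 0 < V)
    (hgbar : 0 < gbar)
    (rg : ℝ → ℝ → ℝ)
    (hrg_nonneg : ∀ s, 0 ≤ s → ∀ x ∈ Set.Icc (0:ℝ) mmax, 0 ≤ rg s x)
    (hrg_le : ∀ s, 0 ≤ s → ∀ x ∈ Set.Icc (0:ℝ) mmax, rg s x ≤ gbar)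
    (hrg_zero : ∀ x ∈ Set.Icc (0:ℝ) mmax, rg 0 x = 0)
    -- `ρ_g` is extended to negative substrate concentrations by `ρ_g(s,x) = ρ_g(max(s,0),x)`
    (hrg_ext : ∀ s x, rg s x = rg (max s 0) x)
    (ν : ℝ → Measure ℝ) (hfin : ∀ u, IsFiniteMeasure (ν u))
    (hmass_meas : Measurable fun u => ((ν u) (Set.Icc (0:ℝ) mmax)).toReal)
    (hlocbdd : ∀ T : ℝ, ∃ C : ℝ, ∀ u ∈ Set.Icc (0:ℝ) T,
      ((ν u) (Set.Icc (0:ℝ) mmax)).toReal ≤ C)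
    (S : ℝ → ℝ) (hS_cont : Continuous S) (hS0 : 0 ≤ S 0)
    (hS_int : ∀ t, 0 ≤ t →
      IntervalIntegrable (fun u => rhoS mmax D sIn k V rg (S u) (ν u)) volume 0 t)
    (hS_eq : ∀ t, 0 ≤ t →
      S t = S 0 + ∫ u in (0:ℝ)..t, rhoS mmax D sIn k V rg (S u) (ν u)) :
    (∀ u, 0 ≤ u →
      rhoS mmax D sIn k V rg (S u) (ν u) ≤ D * sIn
      ∧ - (D * max (S 0) sIn) - (k / V) * gbar * ((ν u) (Set.Icc (0:ℝ) mmax)).toReal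
          ≤ rhoS mmax D sIn k V rg (S u) (ν u))
    ∧ ∀ t, 0 ≤ t →
        (∫ u in (0:ℝ)..t, |rhoS mmax D sIn k V rg (S u) (ν u)|)
          ≤ D * t * max (S 0) sIn
            + (k / V) * gbar * ∫ u in (0:ℝ)..t, ((ν u) (Set.Icc (0:ℝ) mmax)).toReal := by
  have hkV : 0 ≤ k / V := (div_pos hk hV).le
  have hS_nonneg : ∀ t, 0 ≤ t → 0 ≤ S t := fun t ht =>
    le_of_eq_add_integral_of_nonneg_below hS_cont hS_int hS_eq
      (fun u _ hSu => by
        rw [rhoS_of_nonpos hrg_zero hrg_ext hSu.le]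
        exact mul_nonneg hD.le (by linarith))
      hS0 ht
  have hS_le : ∀ t, 0 ≤ t → S t ≤ max (S 0) sIn := fun t ht =>
    le_of_eq_add_integral_of_nonpos_above hS_cont hS_int hS_eq
      (fun u hu hSu => (rhoS_le_of_nonneg hkV hrg_nonneg (hS_nonneg u hu)).trans <|
        mul_nonpos_of_nonneg_of_nonpos hD.le (by linarith [le_max_right (S 0) sIn]))
      (le_max_left _ _) ht
  refine ⟨fun u hu => ?_, fun t ht => ?_⟩
  · have := hfin u
    exact ⟨rhoS_le hD.le hkV hrg_nonneg (hS_nonneg u hu),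
      neg_le_rhoS hD.le hsIn.le hkV hrg_nonneg hrg_le (hS_nonneg u hu) (hS_le u hu)⟩
  · obtain ⟨C, hC⟩ := hlocbdd t
    have hmass_int := intervalIntegrable_of_norm_le_const hmass_meas ht fun u hu => by
      rw [Real.norm_of_nonneg ENNReal.toReal_nonneg]
      exact hC u hu
    refine (integral_abs_le_of_abs_le (a := D * max (S 0) sIn) (c := k / V * gbar) ht
      (hS_int t ht) hmass_int fun u hu => ?_).trans_eq (by ring)
    have := hfin u
    exact abs_rhoS_le hD.le hsIn.le (le_max_right _ _) hkV hgbar.le hrg_nonneg hrg_le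
      (hS_nonneg u hu.1) (hS_le u hu.1)

/-- Along a continuous solution `S` of the substrate equation
`S_t = S_0 + ∫_0^t ρ_s(S_u, ν_u) du` with `S_0 ≥ 0`, one has, for every `u ≥ 0`,
`ρ_s(S_u, ν_u) ≤ D s_in` and
`ρ_s(S_u, ν_u) ≥ − D max(S_0, s_in) − (k/V) ḡ ν_u(X)`, and consequently, for every `t ≥ 0`,
`∫_0^t |ρ_s(S_u, ν_u)| du ≤ D t max(S_0, s_in) + (k/V) ḡ ∫_0^t ν_u(X) du`. -/
theorem rhoS_bounds
    (mmax D sIn k V gbar kg : ℝ)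
    (hmmax : 0 < mmax) (hD : 0 < D) (hsIn : 0 < sIn) (hk : 0 < k) (hV : 0 < V)
    (hgbar : 0 < gbar) (hkg : 0 ≤ kg)
    (rg : ℝ → ℝ → ℝ)
    (hrg_meas : ∀ s : ℝ, Measurable (rg s))
    (hrg_nonneg : ∀ s, 0 ≤ s → ∀ x ∈ Set.Icc (0:ℝ) mmax, 0 ≤ rg s x)
    (hrg_le : ∀ s, 0 ≤ s → ∀ x ∈ Set.Icc (0:ℝ) mmax, rg s x ≤ gbar)
    (hrg_lip : ∀ s₁ s₂, 0 ≤ s₁ → 0 ≤ s₂ → ∀ x ∈ Set.Icc (0:ℝ) mmax,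
      |rg s₁ x - rg s₂ x| ≤ kg * |s₁ - s₂|)
    (hrg_zero : ∀ x ∈ Set.Icc (0:ℝ) mmax, rg 0 x = 0)
    (hrg_mmax : ∀ s, 0 ≤ s → rg s mmax = 0)
    -- `ρ_g` is extended to negative substrate concentrations by `ρ_g(s,x) = ρ_g(max(s,0),x)`
    (hrg_ext : ∀ s x, rg s x = rg (max s 0) x)
    (ν : ℝ → Measure ℝ) (hfin : ∀ u, IsFiniteMeasure (ν u))
    (hmeas : ∀ s, 0 ≤ s →
      Measurable fun u => ∫ x in Set.Icc (0:ℝ) mmax, rg s x ∂(ν u))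
    (hmass_meas : Measurable fun u => ((ν u) (Set.Icc (0:ℝ) mmax)).toReal)
    (hlocbdd : ∀ T : ℝ, ∃ C : ℝ, ∀ u ∈ Set.Icc (0:ℝ) T,
      ((ν u) (Set.Icc (0:ℝ) mmax)).toReal ≤ C)
    (S : ℝ → ℝ) (hS_cont : Continuous S) (hS0 : 0 ≤ S 0)
    (hS_int : ∀ t, 0 ≤ t →
      IntervalIntegrable (fun u => rhoS mmax D sIn k V rg (S u) (ν u)) volume 0 t)
    (hS_eq : ∀ t, 0 ≤ t →
      S t = S 0 + ∫ u in (0:ℝ)..t, rhoS mmax D sIn k V rg (S u) (ν u)) :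
    (∀ u, 0 ≤ u →
      rhoS mmax D sIn k V rg (S u) (ν u) ≤ D * sIn
      ∧ - (D * max (S 0) sIn) - (k / V) * gbar * ((ν u) (Set.Icc (0:ℝ) mmax)).toReal
          ≤ rhoS mmax D sIn k V rg (S u) (ν u))
    ∧ ∀ t, 0 ≤ t →
        (∫ u in (0:ℝ)..t, |rhoS mmax D sIn k V rg (S u) (ν u)|)
          ≤ D * t * max (S 0) sIn
            + (k / V) * gbar * ∫ u in (0:ℝ)..t, ((ν u) (Set.Icc (0:ℝ) mmax)).toReal :=
  rhoS_bounds_general mmax D sIn k V gbar hD hsIn hk hV hgbar rg hrg_nonneg hrg_le hrg_zero hrg_ext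
    ν hfin hmass_meas hlocbdd S hS_cont hS0 hS_int hS_eq
end
end

section
/- Let μ̃ : [0,∞) → [0,∞) be continuous, and consider the linear growth speed ρ_g(s,x) = μ̃(s)·x. Suppose λ is continuous with 0 ≤ λ ≤ λ̄ and λ(s,x) = 0 for x ≤ m_div for some m_div > 0, and Q(dα) = q(α) dα with q : [0,1] → [0,∞) a continuous probability density with q(α) = q(1−α), extended by 0 outside [0,1]. Let T > 0, S : [0,T] → [0,∞) continuously differentiable, and p : [0,T] × X → [0,∞) continuously differentiable with p_t(0) = 0 and p_t(m_max) = 0 for all t ∈ [0,T], solving: dS_t/dt = D(s_in − S_t) − (k/V)∫_X μ̃(S_t)·x·p_t(x) dx, and ∂_t p_t(x) + ∂_x(μ̃(S_t)·x·p_t(x)) + (λ(S_t, x) + D) p_t(x) = 2∫_X (λ(S_t, z)/z) q(x/z) p_t(z) dz on [0,T] × X. Define the biomass concentration Y_t = (1/V)∫_X x·p_t(x) dx. Then (Y, S) satisfies the classical chemostat ordinary differential equations: dY_t/dt = (μ̃(S_t) − D)·Y_t and dS_t/dt = D(s_in − S_t) − k·μ̃(S_t)·Y_t for all t ∈ [0,T].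 -/
/-!
Multiply the population-balance equation by `x` and integrate over `[0, m_max]`. The
transport term integrates by parts to `-μ̃(S_t) ∫ x p_t`: the boundary term `x² p_t(x)`
vanishes at `0` because of the weight and at `m_max` because `p_t(m_max) = 0`. By Fubini
the fragmentation gain `∫ x · 2 ∫ (λ(z)/z) q(x/z) p_t(z) dz dx` equals the loss
`∫ λ x p_t`, since the substitution `x = α z` turns the inner integral into
`z² ∫ α q(α) dα` and a symmetric probability density has mean `1/2`. What remains is
`∫ x ∂_t p_t = (μ̃(S_t) - D) ∫ x p_t`, and differentiating under the integral sign gives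
the biomass equation; the substrate equation only needs `∫ μ̃(S_t) x p_t = μ̃(S_t) ∫ x p_t`.
-/

open MeasureTheory Filter Set

theorem intervalIntegral_id_mul_eq_half_of_symm {q : ℝ → ℝ}
    (hq : IntervalIntegrable q volume 0 1) (hq_symm : ∀ α ∈ Icc (0:ℝ) 1, q α = q (1 - α)) :
    ∫ u in (0:ℝ)..1, u * q u = (∫ u in (0:ℝ)..1, q u) / 2 := by
  have hmul : IntervalIntegrable (fun u => u * q u) volume 0 1 :=
    hq.continuousOn_mul continuousOn_id
  have hreflect : ∫ u in (0:ℝ)..1, u * q u = ∫ u in (0:ℝ)..1, (1 - u) * q u :=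
    calc ∫ u in (0:ℝ)..1, u * q u = ∫ u in (0:ℝ)..1, (1 - u) * q (1 - u) := by
          simpa using (intervalIntegral.integral_comp_sub_left (fun u => u * q u) (1:ℝ)
            (a := 0) (b := 1)).symm
      _ = ∫ u in (0:ℝ)..1, (1 - u) * q u := by
          refine intervalIntegral.integral_congr fun u hu => ?_
          rw [uIcc_of_le zero_le_one] at hu
          rw [← hq_symm u hu]
  have hsplit : ∫ u in (0:ℝ)..1, (1 - u) * q u
      = (∫ u in (0:ℝ)..1, q u) - ∫ u in (0:ℝ)..1, u * q u := by
    simp only [sub_mul, one_mul]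
    exact intervalIntegral.integral_sub hq hmul
  linarith

theorem setIntegral_Icc_mul_comp_div {q : ℝ → ℝ}
    (hq_zero : ∀ α ∉ Icc (0:ℝ) 1, q α = 0) {m z : ℝ} (hz : 0 < z) (hzm : z ≤ m) :
    ∫ x in Icc 0 m, x * q (x / z) = z ^ 2 * ∫ u in (0:ℝ)..1, u * q u := by
  have hvanish : ∀ x ∈ Icc 0 m \ Icc 0 z, x * q (x / z) = 0 := fun x hx => by
    rw [hq_zero _ fun h => hx.2 ⟨hx.1.1, (div_le_one hz).mp h.2⟩, mul_zero]
  rw [setIntegral_eq_of_subset_of_forall_sdiff_eq_zero measurableSet_Icc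
      (Icc_subset_Icc_right hzm) hvanish,
    integral_Icc_eq_integral_Ioc, ← intervalIntegral.integral_of_le hz.le]
  calc ∫ x in (0:ℝ)..z, x * q (x / z) = ∫ x in (0:ℝ)..z, z * ((x / z) * q (x / z)) := by
        refine intervalIntegral.integral_congr fun x _ => ?_
        field_simp
    _ = z ^ 2 * ∫ u in (0:ℝ)..1, u * q u := by
        rw [intervalIntegral.integral_const_mul,
          intervalIntegral.integral_comp_div (fun u => u * q u) hz.ne', zero_div,
          div_self hz.ne', smul_eq_mul]
        ring

theorem setIntegral_Icc_sq_mul_deriv {P P' : ℝ → ℝ} {m : ℝ} (hm : 0 ≤ m)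
    (hP : ∀ x ∈ Icc 0 m, HasDerivWithinAt P (P' x) (Icc 0 m) x)
    (hP' : ContinuousOn P' (Icc 0 m)) :
    ∫ x in Icc 0 m, x ^ 2 * P' x = m ^ 2 * P m - 2 * ∫ x in Icc 0 m, x * P x := by
  simp only [integral_Icc_eq_integral_Ioc, ← intervalIntegral.integral_of_le hm]
  rw [← uIcc_of_le hm] at hP hP'
  rw [intervalIntegral.integral_mul_deriv_eq_deriv_mul_of_hasDerivWithinAt
      (u' := fun x => 2 * x) (fun x _ => by simpa using (hasDerivAt_pow 2 x).hasDerivWithinAt)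
      hP ((by fun_prop : Continuous fun x : ℝ => 2 * x).intervalIntegrable 0 m)
      hP'.intervalIntegrable,
    ← intervalIntegral.integral_const_mul]
  simp only [mul_assoc]
  ring

theorem ContinuousOn.measurable_of_eq_zero_off {X Y : Type*} [TopologicalSpace X]
    [MeasurableSpace X] [OpensMeasurableSpace X] [TopologicalSpace Y] [MeasurableSpace Y]
    [BorelSpace Y] [Zero Y] {f : X → Y} {s : Set X} (hf : ContinuousOn f s)
    (hs : MeasurableSet s) (hf_zero : ∀ x ∉ s, f x = 0) : Measurable f := by
  classical
  convert hf.measurable_piecewise (continuousOn_const (c := 0)) hs using 1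
  ext x
  by_cases hx : x ∈ s <;> simp [hx, hf_zero]

theorem integrable_fragmentation_kernel {m d : ℝ} (hd : 0 < d) {b q P : ℝ → ℝ}
    (hb : ContinuousOn b (Icc 0 m)) (hb_zero : ∀ x ≤ d, b x = 0)
    (hq : ContinuousOn q (Icc 0 1)) (hq_zero : ∀ α ∉ Icc (0:ℝ) 1, q α = 0)
    (hP : ContinuousOn P (Icc 0 m)) :
    Integrable (fun w : ℝ × ℝ => w.1 * (b w.2 / w.2 * q (w.1 / w.2) * P w.2))
      ((volume.restrict (Icc 0 m)).prod (volume.restrict (Icc 0 m))) := by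
  obtain ⟨Cb, hCb⟩ := isCompact_Icc.exists_bound_of_continuousOn hb
  obtain ⟨Cq, hCq⟩ := isCompact_Icc.exists_bound_of_continuousOn hq
  obtain ⟨CP, hCP⟩ := isCompact_Icc.exists_bound_of_continuousOn hP
  have hq_le : ∀ α, ‖q α‖ ≤ |Cq| := fun α => by
    by_cases h : α ∈ Icc (0:ℝ) 1
    · exact (hCq α h).trans (le_abs_self Cq)
    · simp [hq_zero α h]
  -- `b` vanishes below `d`, so `b z / z` stays bounded near `z = 0`
  have hdiv_le : ∀ z ∈ Icc 0 m, ‖b z / z‖ ≤ |Cb| / d := fun z hz => by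
    rcases le_or_gt z d with hzd | hdz
    · rw [hb_zero z hzd, zero_div, norm_zero]
      positivity
    · rw [norm_div, Real.norm_of_nonneg (hd.trans hdz).le]
      exact div_le_div₀ (abs_nonneg _) ((hCb z hz).trans (le_abs_self Cb)) hd hdz.le
  have hmeas : AEMeasurable (fun w : ℝ × ℝ => w.1 * (b w.2 / w.2 * q (w.1 / w.2) * P w.2))
      ((volume.restrict (Icc 0 m)).prod (volume.restrict (Icc 0 m))) := by
    have hq_meas := hq.measurable_of_eq_zero_off measurableSet_Icc hq_zero
    exact measurable_fst.aemeasurable.mul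
      ((((hb.aemeasurable measurableSet_Icc).comp_snd.div measurable_snd.aemeasurable).mul
        (hq_meas.comp (measurable_fst.div measurable_snd)).aemeasurable).mul
        (hP.aemeasurable measurableSet_Icc).comp_snd)
  have hbox : ∀ᵐ w ∂(volume.restrict (Icc (0:ℝ) m)).prod (volume.restrict (Icc 0 m)),
      w ∈ Icc 0 m ×ˢ Icc 0 m := by
    rw [Measure.prod_restrict]
    exact ae_restrict_mem (measurableSet_Icc.prod measurableSet_Icc)
  refine Integrable.of_bound hmeas.aestronglyMeasurable (|m| * (|Cb| / d * |Cq| * |CP|)) ?_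
  filter_upwards [hbox] with w hw
  rw [norm_mul, norm_mul, norm_mul]
  gcongr
  · exact (Real.norm_of_nonneg hw.1.1).trans_le (hw.1.2.trans (le_abs_self m))
  · exact hdiv_le w.2 hw.2
  · exact hq_le _
  · exact (hCP w.2 hw.2).trans (le_abs_self CP)

theorem setIntegral_mul_fragmentation_gain {m d : ℝ} (hd : 0 < d) {b q P : ℝ → ℝ}
    (hb : ContinuousOn b (Icc 0 m)) (hb_zero : ∀ x ≤ d, b x = 0)
    (hq : ContinuousOn q (Icc 0 1)) (hq_zero : ∀ α ∉ Icc (0:ℝ) 1, q α = 0)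
    (hq_prob : ∫ α in (0:ℝ)..1, q α = 1)
    (hq_symm : ∀ α ∈ Icc (0:ℝ) 1, q α = q (1 - α))
    (hP : ContinuousOn P (Icc 0 m)) :
    ∫ x in Icc 0 m, x * (2 * ∫ z in Icc 0 m, b z / z * q (x / z) * P z)
      = ∫ z in Icc 0 m, b z * z * P z := by
  have hmoment : ∫ u in (0:ℝ)..1, u * q u = 1 / 2 := by
    rw [intervalIntegral_id_mul_eq_half_of_symm (hq.intervalIntegrable_of_Icc zero_le_one)
      hq_symm, hq_prob]
  calc ∫ x in Icc 0 m, x * (2 * ∫ z in Icc 0 m, b z / z * q (x / z) * P z)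
      = 2 * ∫ x in Icc 0 m, ∫ z in Icc 0 m, x * (b z / z * q (x / z) * P z) := by
        rw [← integral_const_mul]
        congr with x
        rw [integral_const_mul]
        ring
    _ = 2 * ∫ z in Icc 0 m, ∫ x in Icc 0 m, x * (b z / z * q (x / z) * P z) := by
        rw [integral_integral_swap (integrable_fragmentation_kernel hd hb hb_zero hq hq_zero hP)]
    _ = ∫ z in Icc 0 m, b z * z * P z := by
        rw [← integral_const_mul]
        refine setIntegral_congr_fun measurableSet_Icc fun z hz => ?_
        rcases le_or_gt z d with hzd | hdz
        · simp [hb_zero z hzd]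
        · calc 2 * ∫ x in Icc 0 m, x * (b z / z * q (x / z) * P z)
              = 2 * (b z / z * P z) * ∫ x in Icc 0 m, x * q (x / z) := by
                rw [← integral_const_mul, ← integral_const_mul]
                congr with x
                ring
            _ = b z * z * P z := by
                rw [setIntegral_Icc_mul_comp_div hq_zero (hd.trans hdz) hz.2, hmoment]
                field_simp

theorem hasDerivWithinAt_setIntegral_of_continuousOn {s K : Set ℝ} (hs : IsCompact s)
    (hs_conv : Convex ℝ s) (hK : IsCompact K) {f f' : ℝ → ℝ → ℝ}
    (hf : ContinuousOn (fun w : ℝ × ℝ => f w.1 w.2) (s ×ˢ K))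
    (hf' : ∀ t ∈ s, ∀ x ∈ K, HasDerivWithinAt (fun τ => f τ x) (f' t x) s t)
    (hf'_cont : ContinuousOn (fun w : ℝ × ℝ => f' w.1 w.2) (s ×ˢ K))
    {t : ℝ} (ht : t ∈ s) :
    HasDerivWithinAt (fun τ => ∫ x in K, f τ x) (∫ x in K, f' t x) s t := by
  have hint : ∀ τ ∈ s, IntegrableOn (f τ) K := fun τ hτ =>
    (hf.uncurry_left τ hτ).integrableOn_compact hK
  have hint' : IntegrableOn (f' t) K := (hf'_cont.uncurry_left t ht).integrableOn_compact hK
  refine .of_isLittleO (Asymptotics.isLittleO_iff.2 fun c hc => ?_)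
  set ε := c / (volume.real K + 1)
  have hεK : ε * volume.real K ≤ c := by
    rw [div_mul_eq_mul_div, div_le_iff₀ (by positivity)]
    nlinarith [measureReal_nonneg (μ := volume) (s := K)]
  obtain ⟨δ, hδ, hclose⟩ := Metric.uniformContinuousOn_iff.1
    ((hs.prod hK).uniformContinuousOn_of_continuous hf'_cont) ε (by positivity)
  filter_upwards [inter_mem_nhdsWithin s (Metric.ball_mem_nhds t hδ)] with τ hτ
  have hpoint : ∀ x ∈ K, ‖f τ x - f t x - (τ - t) • f' t x‖ ≤ ε * ‖τ - t‖ := by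
    intro x hx
    have hderiv : ∀ u ∈ s ∩ Metric.ball t δ, HasDerivWithinAt (fun u => f u x - u * f' t x)
        (f' u x - f' t x) (s ∩ Metric.ball t δ) u := fun u hu =>
      ((hf' u hu.1 x hx).sub ((hasDerivAt_id u).mul_const (f' t x)).hasDerivWithinAt).mono
        inter_subset_left |>.congr_deriv (by simp)
    have hbound : ∀ u ∈ s ∩ Metric.ball t δ, ‖f' u x - f' t x‖ ≤ ε := fun u hu =>
      (hclose (u, x) ⟨hu.1, hx⟩ (t, x) ⟨ht, hx⟩ (by simpa [Prod.dist_eq] using hu.2)).le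
    calc ‖f τ x - f t x - (τ - t) • f' t x‖
        = ‖(f τ x - τ * f' t x) - (f t x - t * f' t x)‖ := by
          congr 1
          rw [smul_eq_mul]
          ring
      _ ≤ ε * ‖τ - t‖ := Convex.norm_image_sub_le_of_norm_hasDerivWithin_le hderiv hbound
          (hs_conv.inter (convex_ball t δ)) ⟨ht, Metric.mem_ball_self hδ⟩ hτ
  calc ‖(∫ x in K, f τ x) - (∫ x in K, f t x) - (τ - t) • ∫ x in K, f' t x‖
      = ‖∫ x in K, (f τ x - f t x - (τ - t) • f' t x)‖ := by
        rw [← integral_smul, ← integral_sub (hint τ hτ.1) (hint t ht),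
          ← integral_sub (f := fun x => f τ x - f t x) (g := fun x => (τ - t) • f' t x)
            ((hint τ hτ.1).sub (hint t ht)) (hint'.smul (τ - t))]
    _ ≤ ε * ‖τ - t‖ * volume.real K :=
        norm_setIntegral_le_of_norm_le_const hK.measure_lt_top hpoint
    _ = ‖τ - t‖ * (ε * volume.real K) := by ring
    _ ≤ c * ‖τ - t‖ := by
        rw [mul_comm c]
        gcongr

theorem setIntegral_mul_eq_of_population_balance {m d g D : ℝ} (hm : 0 ≤ m) (hd : 0 < d)
    {b q P Pt Px : ℝ → ℝ} (hb : ContinuousOn b (Icc 0 m)) (hb_zero : ∀ x ≤ d, b x = 0)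
    (hq : ContinuousOn q (Icc 0 1)) (hq_zero : ∀ α ∉ Icc (0:ℝ) 1, q α = 0)
    (hq_prob : ∫ α in (0:ℝ)..1, q α = 1)
    (hq_symm : ∀ α ∈ Icc (0:ℝ) 1, q α = q (1 - α))
    (hPm : P m = 0) (hPx : ∀ x ∈ Icc 0 m, HasDerivWithinAt P (Px x) (Icc 0 m) x)
    (hPx_cont : ContinuousOn Px (Icc 0 m)) (hPt : ContinuousOn Pt (Icc 0 m))
    (hpde : ∀ x ∈ Icc 0 m, Pt x + (g * P x + g * x * Px x) + (b x + D) * P x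
      = 2 * ∫ z in Icc 0 m, b z / z * q (x / z) * P z) :
    ∫ x in Icc 0 m, x * Pt x = (g - D) * ∫ x in Icc 0 m, x * P x := by
  have hP : ContinuousOn P (Icc 0 m) := fun x hx => (hPx x hx).continuousWithinAt
  have hparts := setIntegral_Icc_sq_mul_deriv hm hPx hPx_cont
  rw [hPm, mul_zero, zero_sub] at hparts
  have hfrag := setIntegral_mul_fragmentation_gain hd hb hb_zero hq hq_zero hq_prob hq_symm hP
  have hweighted : ∫ x in Icc 0 m, x * (2 * ∫ z in Icc 0 m, b z / z * q (x / z) * P z)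
      = (∫ x in Icc 0 m, x * Pt x)
        + g * ((∫ x in Icc 0 m, x * P x) + ∫ x in Icc 0 m, x ^ 2 * Px x)
        + ((∫ x in Icc 0 m, b x * x * P x) + D * ∫ x in Icc 0 m, x * P x) := by
    calc ∫ x in Icc 0 m, x * (2 * ∫ z in Icc 0 m, b z / z * q (x / z) * P z)
        = ∫ x in Icc 0 m, (x * Pt x + g * (x * P x + x ^ 2 * Px x)
            + (b x * x * P x + D * (x * P x))) :=
          setIntegral_congr_fun measurableSet_Icc fun x hx => by rw [← hpde x hx]; ring
      _ = _ := by
          rw [integral_add, integral_add, integral_const_mul, integral_add, integral_add,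
            integral_const_mul]
          all_goals apply ContinuousOn.integrableOn_Icc; fun_prop
  linear_combination hfrag - hweighted - g * hparts

theorem population_balance_to_classical_chemostat_general
    (mmax D sIn k V mdiv : ℝ)
    (hmmax : 0 < mmax) (hmdiv : 0 < mdiv)
    (mu : ℝ → ℝ)
    (lam : ℝ → ℝ → ℝ)
    (hlam_cont : ContinuousOn (fun sx : ℝ × ℝ => lam sx.1 sx.2)
      (Set.Ici 0 ×ˢ Set.Icc 0 mmax))
    (hlam_zero : ∀ s, 0 ≤ s → ∀ x : ℝ, x ≤ mdiv → lam s x = 0)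
    -- `q` is a continuous symmetric probability density on `[0,1]`, extended by `0` outside
    (q : ℝ → ℝ)
    (hq_cont : ContinuousOn q (Set.Icc (0:ℝ) 1))
    (hq_zero : ∀ α, α ∉ Set.Icc (0:ℝ) 1 → q α = 0)
    (hq_prob : (∫ α in (0:ℝ)..1, q α) = 1)
    (hq_symm : ∀ α ∈ Set.Icc (0:ℝ) 1, q α = q (1 - α))
    (T : ℝ)
    (S : ℝ → ℝ) (hS_nonneg : ∀ t ∈ Set.Icc (0:ℝ) T, 0 ≤ S t)
    (p pt px : ℝ → ℝ → ℝ)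
    (hp_mmax : ∀ t ∈ Set.Icc (0:ℝ) T, p t mmax = 0)
    (hp_cont : ContinuousOn (fun tx : ℝ × ℝ => p tx.1 tx.2)
      (Set.Icc 0 T ×ˢ Set.Icc 0 mmax))
    (hpt : ∀ t ∈ Set.Icc (0:ℝ) T, ∀ x ∈ Set.Icc (0:ℝ) mmax,
      HasDerivWithinAt (fun τ => p τ x) (pt t x) (Set.Icc 0 T) t)
    (hpx : ∀ t ∈ Set.Icc (0:ℝ) T, ∀ x ∈ Set.Icc (0:ℝ) mmax,
      HasDerivWithinAt (fun y => p t y) (px t x) (Set.Icc 0 mmax) x)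
    (hpt_cont : ContinuousOn (fun tx : ℝ × ℝ => pt tx.1 tx.2)
      (Set.Icc 0 T ×ˢ Set.Icc 0 mmax))
    (hpx_cont : ContinuousOn (fun tx : ℝ × ℝ => px tx.1 tx.2)
      (Set.Icc 0 T ×ˢ Set.Icc 0 mmax))
    -- substrate equation, with `ρ_g(s,x) = μ̃(s) x`
    (hS_ode : ∀ t ∈ Set.Icc (0:ℝ) T,
      HasDerivWithinAt S
        (D * (sIn - S t) - (k / V) * ∫ x in Set.Icc (0:ℝ) mmax, mu (S t) * x * p t x)
        (Set.Icc 0 T) t)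
    -- population-balance equation, with `∂_x(μ̃(S_t) x p_t(x)) = μ̃(S_t) (p + x ∂_x p)`
    (hpde : ∀ t ∈ Set.Icc (0:ℝ) T, ∀ x ∈ Set.Icc (0:ℝ) mmax,
      pt t x + (mu (S t) * p t x + mu (S t) * x * px t x) + (lam (S t) x + D) * p t x
        = 2 * ∫ z in Set.Icc (0:ℝ) mmax, (lam (S t) z / z) * q (x / z) * p t z) :
    ∀ t ∈ Set.Icc (0:ℝ) T,
      HasDerivWithinAt (fun τ => (1 / V) * ∫ x in Set.Icc (0:ℝ) mmax, x * p τ x)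
        ((mu (S t) - D) * ((1 / V) * ∫ x in Set.Icc (0:ℝ) mmax, x * p t x))
        (Set.Icc 0 T) t
      ∧ HasDerivWithinAt S
          (D * (sIn - S t)
            - k * mu (S t) * ((1 / V) * ∫ x in Set.Icc (0:ℝ) mmax, x * p t x))
          (Set.Icc 0 T) t := by
  intro t ht
  have hS0 := hS_nonneg t ht
  have hmoment : ∫ x in Icc 0 mmax, x * pt t x
      = (mu (S t) - D) * ∫ x in Icc 0 mmax, x * p t x :=
    setIntegral_mul_eq_of_population_balance hmmax.le hmdiv
      (hlam_cont.uncurry_left (S t) hS0) (hlam_zero (S t) hS0) hq_cont hq_zero hq_prob hq_symm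
      (hp_mmax t ht) (hpx t ht) (hpx_cont.uncurry_left t ht) (hpt_cont.uncurry_left t ht)
      (hpde t ht)
  have hbiomass : HasDerivWithinAt (fun τ => ∫ x in Icc 0 mmax, x * p τ x)
      (∫ x in Icc 0 mmax, x * pt t x) (Icc 0 T) t :=
    hasDerivWithinAt_setIntegral_of_continuousOn isCompact_Icc (convex_Icc 0 T) isCompact_Icc
      (continuous_snd.continuousOn.mul hp_cont) (fun τ hτ x hx => (hpt τ hτ x hx).const_mul x)
      (continuous_snd.continuousOn.mul hpt_cont) ht
  have hconsumption : ∫ x in Icc 0 mmax, mu (S t) * x * p t x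
      = mu (S t) * ∫ x in Icc 0 mmax, x * p t x := by
    simp only [mul_assoc, integral_const_mul]
  rw [hmoment] at hbiomass
  exact ⟨(hbiomass.const_mul (1 / V)).congr_deriv (by ring),
    (hS_ode t ht).congr_deriv (by rw [hconsumption]; ring)⟩

/-- For the linear growth speed `ρ_g(s,x) = μ̃(s) x`, a (smooth,
nonnegative) solution `(S, p)` of the strong population-balance chemostat system with
`p_t(0) = p_t(m_max) = 0` yields, for the biomass concentration
`Y_t = (1/V) ∫_X x p_t(x) dx`, the classical chemostat ordinary differential equations
`dY_t/dt = (μ̃(S_t) − D) Y_t` and `dS_t/dt = D (s_in − S_t) − k μ̃(S_t) Y_t` on `[0,T]`. -/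
theorem population_balance_to_classical_chemostat
    (mmax D sIn k V lamBar mdiv : ℝ)
    (hmmax : 0 < mmax) (hD : 0 < D) (hsIn : 0 < sIn) (hk : 0 < k) (hV : 0 < V)
    (hlamBar : 0 < lamBar) (hmdiv : 0 < mdiv)
    (mu : ℝ → ℝ) (hmu_cont : Continuous mu) (hmu_nonneg : ∀ s, 0 ≤ s → 0 ≤ mu s)
    (lam : ℝ → ℝ → ℝ)
    (hlam_nonneg : ∀ s, 0 ≤ s → ∀ x ∈ Set.Icc (0:ℝ) mmax, 0 ≤ lam s x)
    (hlam_le : ∀ s, 0 ≤ s → ∀ x ∈ Set.Icc (0:ℝ) mmax, lam s x ≤ lamBar)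
    (hlam_cont : ContinuousOn (fun sx : ℝ × ℝ => lam sx.1 sx.2)
      (Set.Ici 0 ×ˢ Set.Icc 0 mmax))
    (hlam_zero : ∀ s, 0 ≤ s → ∀ x : ℝ, x ≤ mdiv → lam s x = 0)
    -- `q` is a continuous symmetric probability density on `[0,1]`, extended by `0` outside
    (q : ℝ → ℝ)
    (hq_cont : ContinuousOn q (Set.Icc (0:ℝ) 1))
    (hq_nonneg : ∀ α ∈ Set.Icc (0:ℝ) 1, 0 ≤ q α)
    (hq_zero : ∀ α, α ∉ Set.Icc (0:ℝ) 1 → q α = 0)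
    (hq_prob : (∫ α in (0:ℝ)..1, q α) = 1)
    (hq_symm : ∀ α ∈ Set.Icc (0:ℝ) 1, q α = q (1 - α))
    (T : ℝ) (hT : 0 < T)
    (S : ℝ → ℝ) (hS_nonneg : ∀ t ∈ Set.Icc (0:ℝ) T, 0 ≤ S t)
    (p pt px : ℝ → ℝ → ℝ)
    (hp_nonneg : ∀ t ∈ Set.Icc (0:ℝ) T, ∀ x ∈ Set.Icc (0:ℝ) mmax, 0 ≤ p t x)
    (hp_zero : ∀ t ∈ Set.Icc (0:ℝ) T, p t 0 = 0)
    (hp_mmax : ∀ t ∈ Set.Icc (0:ℝ) T, p t mmax = 0)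
    (hp_cont : ContinuousOn (fun tx : ℝ × ℝ => p tx.1 tx.2)
      (Set.Icc 0 T ×ˢ Set.Icc 0 mmax))
    (hpt : ∀ t ∈ Set.Icc (0:ℝ) T, ∀ x ∈ Set.Icc (0:ℝ) mmax,
      HasDerivWithinAt (fun τ => p τ x) (pt t x) (Set.Icc 0 T) t)
    (hpx : ∀ t ∈ Set.Icc (0:ℝ) T, ∀ x ∈ Set.Icc (0:ℝ) mmax,
      HasDerivWithinAt (fun y => p t y) (px t x) (Set.Icc 0 mmax) x)
    (hpt_cont : ContinuousOn (fun tx : ℝ × ℝ => pt tx.1 tx.2)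
      (Set.Icc 0 T ×ˢ Set.Icc 0 mmax))
    (hpx_cont : ContinuousOn (fun tx : ℝ × ℝ => px tx.1 tx.2)
      (Set.Icc 0 T ×ˢ Set.Icc 0 mmax))
    -- substrate equation, with `ρ_g(s,x) = μ̃(s) x`
    (hS_ode : ∀ t ∈ Set.Icc (0:ℝ) T,
      HasDerivWithinAt S
        (D * (sIn - S t) - (k / V) * ∫ x in Set.Icc (0:ℝ) mmax, mu (S t) * x * p t x)
        (Set.Icc 0 T) t)
    -- population-balance equation, with `∂_x(μ̃(S_t) x p_t(x)) = μ̃(S_t) (p + x ∂_x p)`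
    (hpde : ∀ t ∈ Set.Icc (0:ℝ) T, ∀ x ∈ Set.Icc (0:ℝ) mmax,
      pt t x + (mu (S t) * p t x + mu (S t) * x * px t x) + (lam (S t) x + D) * p t x
        = 2 * ∫ z in Set.Icc (0:ℝ) mmax, (lam (S t) z / z) * q (x / z) * p t z) :
    ∀ t ∈ Set.Icc (0:ℝ) T,
      HasDerivWithinAt (fun τ => (1 / V) * ∫ x in Set.Icc (0:ℝ) mmax, x * p τ x)
        ((mu (S t) - D) * ((1 / V) * ∫ x in Set.Icc (0:ℝ) mmax, x * p t x))
        (Set.Icc 0 T) t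
      ∧ HasDerivWithinAt S
          (D * (sIn - S t)
            - k * mu (S t) * ((1 / V) * ∫ x in Set.Icc (0:ℝ) mmax, x * p t x))
          (Set.Icc 0 T) t :=
  population_balance_to_classical_chemostat_general mmax D sIn k V mdiv hmmax hmdiv mu lam hlam_cont
    hlam_zero q hq_cont hq_zero hq_prob hq_symm T S hS_nonneg p pt px hp_mmax hp_cont hpt hpx
    hpt_cont hpx_cont hS_ode hpde
end

section
/- Assume in addition that ρ_g and λ are continuous on [0,∞) × X. Fix T > 0, S_0 ≥ 0 and a continuously differentiable f : X → ℝ. Let ζⁿ, ζ : [0,T] → M_F(X) be such that u ↦ ⟨ζⁿ_u, g⟩ and u ↦ ⟨ζ_u, g⟩ are Borel measurable for every continuous g, with sup_n sup_{0 ≤ u ≤ T} ⟨ζⁿ_u, 1⟩ < ∞ and sup_{0 ≤ u ≤ T} ⟨ζ_u, 1⟩ < ∞. If sup_{0 ≤ u ≤ T} d_PR(ζⁿ_u, ζ_u) → 0 as n → ∞ (uniform convergence in the Lévy–Prokhorov metric), then Ψ_t(ζⁿ) → Ψ_t(ζ) for every t ∈ [0,T]. -/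
open MeasureTheory Filter

noncomputable section

/-- The Lévy–Prokhorov distance
`d_PR(μ, ν) = inf{ε > 0 : μ(F) ≤ ν(F^ε) + ε and ν(F) ≤ μ(F^ε) + ε for all closed F}`. -/
def prokhorovDist {Ω : Type*} [MeasurableSpace Ω] [MetricSpace Ω]
    (μ ν : Measure Ω) : ℝ :=
  sInf {ε : ℝ | 0 < ε ∧ ∀ F : Set Ω, IsClosed F →
    μ F ≤ ν (Metric.thickening ε F) + ENNReal.ofReal ε
    ∧ ν F ≤ μ (Metric.thickening ε F) + ENNReal.ofReal ε}

/-- The functional `Ψ_t(ζ)` built from a given substrate trajectory `Sz = S^ζ`: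
`Ψ_t(ζ) = ⟨ζ_t, f⟩ − ⟨ζ_0, f⟩ − ∫_0^t [⋯] du`. -/
def Psi (mmax D : ℝ) (rg lam : ℝ → ℝ → ℝ) (Q : Measure ℝ) (f : ℝ → ℝ)
    (Sz : ℝ → ℝ) (ζ : ℝ → Measure ℝ) (t : ℝ) : ℝ :=
  (∫ x in Set.Icc (0:ℝ) mmax, f x ∂(ζ t)) - (∫ x in Set.Icc (0:ℝ) mmax, f x ∂(ζ 0))
    - ∫ u in (0:ℝ)..t, popIntegrand mmax D rg lam Q f Sz ζ u

/-!
Uniform Lévy–Prokhorov convergence gives, at each time `u`, weak convergence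
`⟨ζⁿ_u, g⟩ → ⟨ζ_u, g⟩` for every `g` continuous on `X`: the layer-cake bound of the
Lévy–Prokhorov distance works for finite measures as well as for probability measures, once the
masses are controlled. Subtracting the two substrate equations, the consumption terms differ by a
term Lipschitz in `Sⁿ − S` (the masses are bounded) plus `⟨ζⁿ_u − ζ_u, ρ_g(S_u, ·)⟩`, whose time
integral tends to `0` by dominated convergence; Grönwall's inequality then gives `Sⁿ → S`.
Every term of the integrand of `Ψ` has the form `⟨ζ_u, G(S_u, ·)⟩` with `G` bounded and Lipschitz
in the concentration uniformly on `X`, so it converges for each `u` and is uniformly bounded, and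
dominated convergence in time concludes.
-/

open Set Metric Topology BoundedContinuousFunction
open scoped ENNReal

section LevyProkhorov

variable {Ω : Type*} [MeasurableSpace Ω] [PseudoMetricSpace Ω]

lemma eventually_measureReal_univ_le_add {μs : ℕ → Measure Ω} {μ : Measure Ω}
    [∀ n, IsFiniteMeasure (μs n)]
    (h : Tendsto (fun n ↦ levyProkhorovEDist (μs n) μ) atTop (𝓝 0)) {δ : ℝ} (hδ : 0 < δ) :
    ∀ᶠ n in atTop, μ.real univ ≤ (μs n).real univ + δ := by
  filter_upwards [h.eventually (gt_mem_nhds (ENNReal.ofReal_pos.2 hδ))] with n hn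
  have := right_measure_le_of_levyProkhorovEDist_lt hn MeasurableSet.univ
  have := ENNReal.toReal_mono (by finiteness)
    (this.trans (add_le_add_left (measure_mono (subset_univ _)) _) :
      μ univ ≤ μs n univ + ENNReal.ofReal δ)
  rwa [ENNReal.toReal_add (measure_ne_top _ _) ENNReal.ofReal_ne_top,
    ENNReal.toReal_ofReal hδ.le] at this

variable [OpensMeasurableSpace Ω]

lemma tendsto_integral_measureReal_thickening_le (f : Ω →ᵇ ℝ) {A : Set ℝ}
    (hA : volume A ≠ ⊤) (μ : Measure Ω) [IsFiniteMeasure μ] :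
    Tendsto (fun ε ↦ ∫ t in A, μ.real (thickening ε {a | t ≤ f a})) (𝓝[>] 0)
      (𝓝 (∫ t in A, μ.real {a | t ≤ f a})) := by
  have : IsFiniteMeasure (volume.restrict A) := ⟨by simpa [lt_top_iff_ne_top] using hA⟩
  refine tendsto_integral_filter_of_dominated_convergence (fun _ ↦ μ.real univ)
    (.of_forall fun ε ↦ ?_) (.of_forall fun ε ↦ .of_forall fun t ↦ ?_) (integrable_const _)
    (.of_forall fun t ↦ ?_)
  · refine (Measurable.ennreal_toReal (Antitone.measurable fun s t hst ↦ ?_)).aestronglyMeasurable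
    exact measure_mono <| thickening_subset_of_subset _ fun ω h ↦ hst.trans h
  · simpa only [Real.norm_eq_abs, abs_of_nonneg measureReal_nonneg]
      using measureReal_mono (subset_univ _)
  · refine (ENNReal.tendsto_toReal (measure_ne_top _ _)).comp
      (tendsto_measure_thickening_of_isClosed ⟨1, one_pos, measure_ne_top _ _⟩ ?_)
    exact isClosed_le continuous_const f.continuous

variable {μs : ℕ → Measure Ω} {μ : Measure Ω} [∀ n, IsFiniteMeasure (μs n)] [IsFiniteMeasure μ]

lemma eventually_integral_lt_add_of_nonneg
    (h : Tendsto (fun n ↦ levyProkhorovEDist (μs n) μ) atTop (𝓝 0))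
    (f : Ω →ᵇ ℝ) (hf : 0 ≤ f) {δ : ℝ} (hδ : 0 < δ) :
    ∀ᶠ n in atTop, ∫ x, f x ∂μs n < ∫ x, f x ∂μ + δ := by
  have hlayer := f.integral_eq_integral_meas_le μ (.of_forall hf)
  have hthick : ∀ᶠ ε in 𝓝[>] (0 : ℝ), 0 < ε ∧
      ∫ t in Ioc 0 ‖f‖, μ.real (thickening ε {a | t ≤ f a}) < ∫ x, f x ∂μ + δ / 2 ∧
      ε * ‖f‖ < δ / 2 := by
    refine eventually_mem_nhdsWithin.and
      (((tendsto_integral_measureReal_thickening_le f (by simp) μ).eventually_lt_const ?_).and ?_)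
    · rw [← hlayer]; linarith
    · have : Tendsto (fun ε : ℝ ↦ ε * ‖f‖) (𝓝[>] 0) (𝓝 0) := by
        simpa using (tendsto_nhdsWithin_of_tendsto_nhds (tendsto_id (x := 𝓝 (0 : ℝ)))).mul_const ‖f‖
      exact this.eventually_lt_const (half_pos hδ)
  obtain ⟨ε, hε, hthick, hsmall⟩ := hthick.exists
  filter_upwards [h.eventually (gt_mem_nhds (ENNReal.ofReal_pos.2 hε))] with n hn
  have := f.integral_le_of_levyProkhorovEDist_lt (μs n) μ hε hn (.of_forall hf)
  linarith

lemma eventually_integral_lt_add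
    (h : Tendsto (fun n ↦ levyProkhorovEDist (μs n) μ) atTop (𝓝 0))
    (f : Ω →ᵇ ℝ) {δ : ℝ} (hδ : 0 < δ) :
    ∀ᶠ n in atTop, ∫ x, f x ∂μs n < ∫ x, f x ∂μ + δ := by
  -- shift `f` to a nonnegative function; the shift costs `‖f‖` times the mass defect
  have hg : 0 ≤ f + const Ω ‖f‖ := fun x ↦ by
    simpa [add_comm, ← sub_eq_add_neg] using
      neg_le_iff_add_nonneg.1 (neg_le.1 (f.neg_norm_le_apply x))
  have hint : ∀ ν : Measure Ω, IsFiniteMeasure ν →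
      ∫ x, (f + const Ω ‖f‖) x ∂ν = ∫ x, f x ∂ν + ‖f‖ * ν.real univ := fun ν _ ↦ by
    simp [integral_add (f.integrable ν) (integrable_const _), mul_comm]
  have hη : 0 < δ / 2 / (‖f‖ + 1) := by positivity
  have hfη : ‖f‖ * (δ / 2 / (‖f‖ + 1)) ≤ δ / 2 := by
    rw [mul_div_assoc', div_le_iff₀ (by positivity)]
    nlinarith [norm_nonneg f]
  filter_upwards [eventually_integral_lt_add_of_nonneg h _ hg (half_pos hδ),
    eventually_measureReal_univ_le_add h hη] with n hn hmass
  rw [hint _ inferInstance, hint _ inferInstance] at hn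
  nlinarith [norm_nonneg f]

theorem tendsto_integral_of_tendsto_levyProkhorovEDist
    (h : Tendsto (fun n ↦ levyProkhorovEDist (μs n) μ) atTop (𝓝 0)) (f : Ω →ᵇ ℝ) :
    Tendsto (fun n ↦ ∫ x, f x ∂μs n) atTop (𝓝 (∫ x, f x ∂μ)) := by
  refine tendsto_order.2 ⟨fun c hc ↦ ?_, fun c hc ↦ ?_⟩
  · filter_upwards [eventually_integral_lt_add h (-f) (sub_pos.2 hc)] with n hn
    simp only [coe_neg, Pi.neg_apply, integral_neg] at hn
    linarith
  · filter_upwards [eventually_integral_lt_add h f (sub_pos.2 hc)] with n hn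
    linarith

end LevyProkhorov

section Prokhorov

variable {Ω : Type*} [MeasurableSpace Ω] [MetricSpace Ω] [BorelSpace Ω]

lemma measure_le_measure_thickening_add_of_forall_isClosed {μ ν : Measure Ω}
    [IsFiniteMeasure μ] {δ : ℝ} {c : ℝ≥0∞}
    (h : ∀ F, IsClosed F → μ F ≤ ν (thickening δ F) + c) {B : Set Ω} (hB : MeasurableSet B) :
    μ B ≤ ν (thickening δ B) + c := by
  rw [hB.measure_eq_iSup_isClosed_of_ne_top (measure_ne_top _ _)]
  exact iSup₂_le fun F hFB ↦ iSup_le fun hF ↦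
    (h F hF).trans (by gcongr; exact thickening_subset_of_subset δ hFB)

lemma levyProkhorovEDist_le_of_prokhorovDist_lt {μ ν : Measure Ω}
    [IsFiniteMeasure μ] [IsFiniteMeasure ν] {ε : ℝ} (h : prokhorovDist μ ν < ε) :
    levyProkhorovEDist μ ν ≤ ENNReal.ofReal ε := by
  have hne : {ε : ℝ | 0 < ε ∧ ∀ F : Set Ω, IsClosed F →
      μ F ≤ ν (thickening ε F) + ENNReal.ofReal ε
      ∧ ν F ≤ μ (thickening ε F) + ENNReal.ofReal ε}.Nonempty := by
    refine ⟨μ.real univ + ν.real univ + 1, by positivity, fun F _ ↦ ⟨?_, ?_⟩⟩ <;>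
    refine le_add_left
      ((ENNReal.le_ofReal_iff_toReal_le (measure_ne_top _ _) (by positivity)).2 ?_) <;>
    rw [← measureReal_def]
    · linarith [measureReal_mono (μ := μ) (subset_univ F), measureReal_nonneg (μ := ν) (s := univ)]
    · linarith [measureReal_mono (μ := ν) (subset_univ F), measureReal_nonneg (μ := μ) (s := univ)]
  obtain ⟨δ, ⟨hδ, hδF⟩, hδε⟩ := exists_lt_of_csInf_lt hne h
  refine sInf_le fun B hB ↦ ?_
  rw [ENNReal.toReal_ofReal (hδ.trans hδε).le]
  have hmono : ∀ {κ₁ κ₂ : Measure Ω} [IsFiniteMeasure κ₁],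
      (∀ F, IsClosed F → κ₁ F ≤ κ₂ (thickening δ F) + ENNReal.ofReal δ) →
      κ₁ B ≤ κ₂ (thickening ε B) + ENNReal.ofReal ε := fun hF ↦
    (measure_le_measure_thickening_add_of_forall_isClosed hF hB).trans (by gcongr)
  exact ⟨hmono fun F hF ↦ (hδF F hF).1, hmono fun F hF ↦ (hδF F hF).2⟩

lemma tendsto_levyProkhorovEDist_of_prokhorovDist {μs : ℕ → Measure Ω} {μ : Measure Ω}
    [∀ n, IsFiniteMeasure (μs n)] [IsFiniteMeasure μ]
    (h : ∀ ε : ℝ, 0 < ε → ∀ᶠ n in atTop, prokhorovDist (μs n) μ ≤ ε) :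
    Tendsto (fun n ↦ levyProkhorovEDist (μs n) μ) atTop (𝓝 0) := by
  refine ENNReal.tendsto_nhds_zero.2 fun ε hε ↦ ?_
  obtain ⟨r, -, hr, hrε⟩ := ENNReal.lt_iff_exists_real_btwn.1 hε
  have hr : 0 < r := ENNReal.ofReal_pos.1 hr
  filter_upwards [h (r / 2) (half_pos hr)] with n hn
  exact (levyProkhorovEDist_le_of_prokhorovDist_lt (hn.trans_lt (half_lt_self hr))).trans hrε.le

end Prokhorov

section IccExtension

lemma exists_boundedContinuousFunction_eqOn_Icc {a b : ℝ} (hab : a ≤ b) {g : ℝ → ℝ}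
    (hg : ContinuousOn g (Icc a b)) : ∃ F : ℝ →ᵇ ℝ, EqOn F g (Icc a b) :=
  ⟨(mkOfCompact ⟨_, hg.domRestrict⟩).compContinuous ⟨projIcc a b hab, continuous_projIcc⟩,
    fun x hx ↦ by simp [projIcc_of_mem hab hx]⟩

lemma measurable_setIntegral_Icc_of_continuousOn {a b : ℝ} (hab : a ≤ b)
    {ξ : ℝ → Measure ℝ}
    (hξ : ∀ g : ℝ → ℝ, Continuous g → Measurable fun u ↦ ∫ x in Icc a b, g x ∂ξ u)
    {g : ℝ → ℝ} (hg : ContinuousOn g (Icc a b)) :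
    Measurable fun u ↦ ∫ x in Icc a b, g x ∂ξ u := by
  obtain ⟨F, hF⟩ := exists_boundedContinuousFunction_eqOn_Icc hab hg
  convert hξ F F.continuous using 2 with u
  exact setIntegral_congr_fun measurableSet_Icc hF.symm

lemma tendsto_setIntegral_Icc_of_tendsto_levyProkhorovEDist {a b : ℝ} (hab : a ≤ b)
    {μs : ℕ → Measure ℝ} {μ : Measure ℝ} [∀ n, IsFiniteMeasure (μs n)] [IsFiniteMeasure μ]
    (hμs : ∀ n, μs n (Icc a b)ᶜ = 0) (hμ : μ (Icc a b)ᶜ = 0)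
    (h : Tendsto (fun n ↦ levyProkhorovEDist (μs n) μ) atTop (𝓝 0))
    {g : ℝ → ℝ} (hg : ContinuousOn g (Icc a b)) :
    Tendsto (fun n ↦ ∫ x in Icc a b, g x ∂μs n) atTop (𝓝 (∫ x in Icc a b, g x ∂μ)) := by
  obtain ⟨F, hF⟩ := exists_boundedContinuousFunction_eqOn_Icc hab hg
  have hsupp : ∀ ν : Measure ℝ, ν (Icc a b)ᶜ = 0 → ∫ x in Icc a b, g x ∂ν = ∫ x, F x ∂ν :=
    fun ν hν ↦ by
      rw [setIntegral_congr_fun measurableSet_Icc hF.symm,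
        Measure.restrict_eq_self_of_ae_mem (ae_iff.2 hν)]
  simpa only [hsupp _ (hμs _), hsupp _ hμ] using tendsto_integral_of_tendsto_levyProkhorovEDist h F

end IccExtension

section Gronwall

theorem le_mul_exp_of_le_add_mul_integral {φ : ℝ → ℝ} {A b T : ℝ} (hb : 0 ≤ b)
    (hφ : ContinuousOn φ (Icc 0 T)) (h : ∀ t ∈ Icc 0 T, φ t ≤ A + b * ∫ u in 0..t, φ u) :
    ∀ t ∈ Icc 0 T, φ t ≤ A * Real.exp (b * t) := by
  intro t ht
  have hT : 0 ≤ T := ht.1.trans ht.2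
  -- extend `φ` continuously to `ℝ` so that `∫₀ˣ φ` is differentiable everywhere
  set ψ : ℝ → ℝ := fun x ↦ φ (projIcc 0 T hT x)
  have hψ : Continuous ψ :=
    hφ.comp_continuous (continuous_subtype_val.comp continuous_projIcc) fun x ↦ Subtype.mem _
  have hψφ : EqOn ψ φ (Icc 0 T) := fun x hx ↦ by simp [ψ, projIcc_of_mem hT hx]
  have hint : ∀ x ∈ Icc 0 T, ∫ u in 0..x, ψ u = ∫ u in 0..x, φ u := fun x hx ↦
    intervalIntegral.integral_congr (hψφ.mono (uIcc_subset_Icc ⟨le_rfl, hT⟩ hx))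
  have hderiv : ∀ x, HasDerivAt (fun y ↦ ∫ u in 0..y, ψ u) (ψ x) x := fun x ↦
    (hψ.integral_hasStrictDerivAt 0 x).hasDerivAt
  have hgr := le_gronwallBound_of_liminf_deriv_right_le (δ := 0) (K := b) (ε := A)
    (fun x _ ↦ (hderiv x).continuousAt.continuousWithinAt)
    (fun x _ r hr ↦ (hderiv x).hasDerivWithinAt.liminf_right_slope_le hr) (by simp)
    (fun x hx ↦ by
      have hx' : x ∈ Icc 0 T := Ico_subset_Icc_self hx
      rw [hψφ hx', hint x hx', add_comm]
      exact h x hx') t ht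
  rw [sub_zero, hint t ht] at hgr
  have hexp : A + b * gronwallBound 0 b A t = A * Real.exp (b * t) := by
    rcases hb.eq_or_lt with rfl | hb
    · simp
    · rw [gronwallBound_of_K_ne_0 hb.ne']
      field_simp
      ring
  calc φ t ≤ A + b * ∫ u in 0..t, φ u := h t ht
    _ ≤ A + b * gronwallBound 0 b A t := by gcongr
    _ = A * Real.exp (b * t) := hexp

end Gronwall

/-- Test functions `G s` on `X` indexed by the substrate concentration `s`, such as
`x ↦ ρ_g(s, x) f'(x)` in `Ψ`. -/
structure IsLipschitzKernel (K : Set ℝ) (M L : ℝ) (G : ℝ → ℝ → ℝ) : Prop where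
  continuousOn : ∀ s, ContinuousOn (G s) K
  abs_le : ∀ s, ∀ x ∈ K, |G s x| ≤ M
  abs_sub_le : ∀ s₁ s₂, ∀ x ∈ K, |G s₁ x - G s₂ x| ≤ L * |s₁ - s₂|

namespace IsLipschitzKernel

variable {K : Set ℝ} {M L : ℝ} {G : ℝ → ℝ → ℝ}

lemma const {g : ℝ → ℝ} (hg : ContinuousOn g K) (hgM : ∀ x ∈ K, |g x| ≤ M) :
    IsLipschitzKernel K M 0 fun _ ↦ g :=
  ⟨fun _ ↦ hg, fun _ ↦ hgM, fun _ _ _ _ ↦ by simp⟩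

lemma mul_right (hG : IsLipschitzKernel K M L G) {φ : ℝ → ℝ} {N : ℝ} (hφ : ContinuousOn φ K)
    (hφN : ∀ x ∈ K, |φ x| ≤ N) :
    IsLipschitzKernel K (M * N) (L * N) fun s x ↦ G s x * φ x where
  continuousOn s := (hG.continuousOn s).mul hφ
  abs_le s x hx := by
    rw [abs_mul]
    exact mul_le_mul (hG.abs_le s x hx) (hφN x hx) (abs_nonneg _)
      ((abs_nonneg _).trans (hG.abs_le s x hx))
  abs_sub_le s₁ s₂ x hx := by
    rw [← sub_mul, abs_mul, mul_right_comm]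
    exact mul_le_mul (hG.abs_sub_le s₁ s₂ x hx) (hφN x hx) (abs_nonneg _)
      ((abs_nonneg _).trans (hG.abs_sub_le s₁ s₂ x hx))

lemma of_extend_max (hc : ContinuousOn (fun sx : ℝ × ℝ ↦ G sx.1 sx.2) (Ici 0 ×ˢ K))
    (hext : ∀ s x, G s x = G (max s 0) x) (hL : 0 ≤ L)
    (hbd : ∀ s, 0 ≤ s → ∀ x ∈ K, |G s x| ≤ M)
    (hlip : ∀ s₁ s₂, 0 ≤ s₁ → 0 ≤ s₂ → ∀ x ∈ K, |G s₁ x - G s₂ x| ≤ L * |s₁ - s₂|) :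
    IsLipschitzKernel K M L G where
  continuousOn s := by
    rw [show G s = G (max s 0) from funext (hext s)]
    exact hc.comp (continuousOn_const.prodMk continuousOn_id)
      fun x hx ↦ ⟨mem_Ici.2 (le_max_right s 0), hx⟩
  abs_le s x hx := hext s x ▸ hbd _ (le_max_right s 0) x hx
  abs_sub_le s₁ s₂ x hx := by
    rw [hext s₁, hext s₂]
    exact (hlip _ _ (le_max_right _ _) (le_max_right _ _) x hx).trans
      (mul_le_mul_of_nonneg_left (abs_max_sub_max_le_abs s₁ s₂ 0) hL)

variable {a b : ℝ}

lemma bound_nonneg (hG : IsLipschitzKernel (Icc a b) M L G) (hab : a ≤ b) : 0 ≤ M :=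
  (abs_nonneg _).trans (hG.abs_le 0 a ⟨le_rfl, hab⟩)

lemma lipschitz_nonneg (hG : IsLipschitzKernel (Icc a b) M L G) (hab : a ≤ b) : 0 ≤ L := by
  simpa using (abs_nonneg _).trans (hG.abs_sub_le 1 0 a ⟨le_rfl, hab⟩)

lemma abs_setIntegral_le {ξ : Measure ℝ} [IsFiniteMeasure ξ]
    (hG : IsLipschitzKernel (Icc a b) M L G) (s : ℝ) :
    |∫ x in Icc a b, G s x ∂ξ| ≤ M * ξ.real (Icc a b) :=
  norm_setIntegral_le_of_norm_le_const (f := G s) (measure_lt_top _ _) (hG.abs_le s)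

lemma abs_setIntegral_sub_le {ξ : Measure ℝ} [IsFiniteMeasure ξ]
    (hG : IsLipschitzKernel (Icc a b) M L G) (s₁ s₂ : ℝ) :
    |∫ x in Icc a b, G s₁ x ∂ξ - ∫ x in Icc a b, G s₂ x ∂ξ|
      ≤ L * |s₁ - s₂| * ξ.real (Icc a b) := by
  rw [← integral_sub (hG.continuousOn s₁).integrableOn_Icc (hG.continuousOn s₂).integrableOn_Icc]
  exact norm_setIntegral_le_of_norm_le_const (f := fun x ↦ G s₁ x - G s₂ x) (measure_lt_top _ _)
    (hG.abs_sub_le s₁ s₂)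

lemma continuous_setIntegral {ξ : Measure ℝ} [IsFiniteMeasure ξ]
    (hG : IsLipschitzKernel (Icc a b) M L G) :
    Continuous fun s ↦ ∫ x in Icc a b, G s x ∂ξ :=
  (LipschitzWith.of_dist_le' (K := L * ξ.real (Icc a b)) fun s₁ s₂ ↦ by
    simpa only [Real.dist_eq, mul_right_comm] using hG.abs_setIntegral_sub_le s₁ s₂).continuous

lemma tendsto_setIntegral (hG : IsLipschitzKernel (Icc a b) M L G) (hab : a ≤ b)
    {ξs : ℕ → Measure ℝ} [∀ n, IsFiniteMeasure (ξs n)] {ξ : Measure ℝ} {C : ℝ}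
    (hmass : ∀ n, (ξs n).real (Icc a b) ≤ C) {s : ℝ}
    (hweak : Tendsto (fun n ↦ ∫ x in Icc a b, G s x ∂ξs n) atTop (𝓝 (∫ x in Icc a b, G s x ∂ξ)))
    {ss : ℕ → ℝ} (hss : Tendsto ss atTop (𝓝 s)) :
    Tendsto (fun n ↦ ∫ x in Icc a b, G (ss n) x ∂ξs n) atTop (𝓝 (∫ x in Icc a b, G s x ∂ξ)) := by
  have hdiff : Tendsto (fun n ↦ ∫ x in Icc a b, G (ss n) x ∂ξs n - ∫ x in Icc a b, G s x ∂ξs n)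
      atTop (𝓝 0) := by
    refine squeeze_zero_norm (a := fun n ↦ L * |ss n - s| * C) (fun n ↦ ?_) ?_
    · exact (hG.abs_setIntegral_sub_le _ _).trans
        (mul_le_mul_of_nonneg_left (hmass n) (by have := hG.lipschitz_nonneg hab; positivity))
    · have : Tendsto (fun n ↦ |ss n - s|) atTop (𝓝 0) := by simpa using (hss.sub_const s).abs
      simpa using (this.const_mul L).mul_const C
  simpa using hdiff.add hweak

end IsLipschitzKernel

structure IsBoundedMeasureFamily (K : Set ℝ) (T C : ℝ) (ξ : ℝ → Measure ℝ) : Prop where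
  isFiniteMeasure : ∀ u, IsFiniteMeasure (ξ u)
  measurable_setIntegral : ∀ g : ℝ → ℝ, Continuous g → Measurable fun u ↦ ∫ x in K, g x ∂ξ u
  measureReal_le : ∀ u ∈ Icc 0 T, (ξ u).real K ≤ C

namespace IsBoundedMeasureFamily

variable {a b T C M L : ℝ} {G : ℝ → ℝ → ℝ} {ξ : ℝ → Measure ℝ}

lemma aemeasurable_setIntegral_comp (hξ : IsBoundedMeasureFamily (Icc a b) T C ξ) (hab : a ≤ b)
    (hG : IsLipschitzKernel (Icc a b) M L G) {S : ℝ → ℝ} {μ : Measure ℝ} (hS : AEMeasurable S μ) :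
    AEMeasurable (fun u ↦ ∫ x in Icc a b, G (S u) x ∂ξ u) μ := by
  have : Measurable (Function.uncurry fun s u ↦ ∫ x in Icc a b, G s x ∂ξ u) :=
    measurable_uncurry_of_continuous_of_measurable
      (fun u ↦ have := hξ.isFiniteMeasure u; hG.continuous_setIntegral)
      (fun s ↦ measurable_setIntegral_Icc_of_continuousOn hab hξ.measurable_setIntegral
        (hG.continuousOn s))
  exact this.comp_aemeasurable (hS.prodMk aemeasurable_id)

lemma abs_setIntegral_le (hξ : IsBoundedMeasureFamily (Icc a b) T C ξ) (hab : a ≤ b)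
    (hG : IsLipschitzKernel (Icc a b) M L G) (s : ℝ) {u : ℝ} (hu : u ∈ Icc 0 T) :
    |∫ x in Icc a b, G s x ∂ξ u| ≤ M * C :=
  have := hξ.isFiniteMeasure u
  (hG.abs_setIntegral_le s).trans
    (mul_le_mul_of_nonneg_left (hξ.measureReal_le u hu) (hG.bound_nonneg hab))

lemma integrableOn_setIntegral_comp (hξ : IsBoundedMeasureFamily (Icc a b) T C ξ) (hab : a ≤ b)
    (hG : IsLipschitzKernel (Icc a b) M L G) {S : ℝ → ℝ} (hS : ContinuousOn S (Icc 0 T)) :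
    IntegrableOn (fun u ↦ ∫ x in Icc a b, G (S u) x ∂ξ u) (Icc 0 T) :=
  .of_bound measure_Icc_lt_top
    (hξ.aemeasurable_setIntegral_comp hab hG
      (hS.aemeasurable measurableSet_Icc)).aestronglyMeasurable
    (M * C) (ae_restrict_of_forall_mem measurableSet_Icc fun _ hu ↦
      hξ.abs_setIntegral_le hab hG _ hu)

lemma intervalIntegrable_setIntegral_comp (hξ : IsBoundedMeasureFamily (Icc a b) T C ξ)
    (hab : a ≤ b) (hG : IsLipschitzKernel (Icc a b) M L G) {S : ℝ → ℝ}
    (hS : ContinuousOn S (Icc 0 T)) {t : ℝ} (ht : t ∈ Icc 0 T) :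
    IntervalIntegrable (fun u ↦ ∫ x in Icc a b, G (S u) x ∂ξ u) volume 0 t :=
  (intervalIntegrable_iff_integrableOn_Ioc_of_le ht.1).2 <|
    (hξ.integrableOn_setIntegral_comp hab hG hS).mono_set
      (Ioc_subset_Icc_self.trans (Icc_subset_Icc_right ht.2))

end IsBoundedMeasureFamily

section WeakConvergence

variable {a b T C M L : ℝ} {G : ℝ → ℝ → ℝ} {ξs : ℕ → ℝ → Measure ℝ} {ξ : ℝ → Measure ℝ}
  {Ss : ℕ → ℝ → ℝ} {S : ℝ → ℝ}

theorem tendsto_intervalIntegral_abs_sub_setIntegral_comp (hab : a ≤ b)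
    (hG : IsLipschitzKernel (Icc a b) M L G)
    (hξs : ∀ n, IsBoundedMeasureFamily (Icc a b) T C (ξs n))
    (hξ : IsBoundedMeasureFamily (Icc a b) T C ξ)
    (hweak : ∀ u ∈ Icc 0 T, ∀ g : ℝ → ℝ, ContinuousOn g (Icc a b) →
      Tendsto (fun n ↦ ∫ x in Icc a b, g x ∂ξs n u) atTop (𝓝 (∫ x in Icc a b, g x ∂ξ u)))
    (hSs : ∀ n, ContinuousOn (Ss n) (Icc 0 T)) (hS : ContinuousOn S (Icc 0 T))
    (hlim : ∀ u ∈ Icc 0 T, Tendsto (fun n ↦ Ss n u) atTop (𝓝 (S u))) {t : ℝ} (ht : t ∈ Icc 0 T) :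
    Tendsto (fun n ↦ ∫ u in 0..t,
        |∫ x in Icc a b, G (Ss n u) x ∂ξs n u - ∫ x in Icc a b, G (S u) x ∂ξ u|) atTop (𝓝 0) := by
  have hsub : uIoc 0 t ⊆ Icc 0 T := by
    rw [uIoc_of_le ht.1]; exact Ioc_subset_Icc_self.trans (Icc_subset_Icc_right ht.2)
  have hmeas : ∀ {ξ' : ℝ → Measure ℝ} {S' : ℝ → ℝ}, IsBoundedMeasureFamily (Icc a b) T C ξ' →
      ContinuousOn S' (Icc 0 T) → AEMeasurable (fun u ↦ ∫ x in Icc a b, G (S' u) x ∂ξ' u)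
        (volume.restrict (uIoc 0 t)) := fun hξ' hS' ↦
    hξ'.aemeasurable_setIntegral_comp hab hG ((hS'.mono hsub).aemeasurable measurableSet_uIoc)
  simpa using intervalIntegral.tendsto_integral_filter_of_dominated_convergence
    (F := fun n u ↦ |∫ x in Icc a b, G (Ss n u) x ∂ξs n u - ∫ x in Icc a b, G (S u) x ∂ξ u|)
    (f := fun _ ↦ 0) (fun _ ↦ M * C + M * C)
    (.of_forall fun n ↦ ((hmeas (hξs n) (hSs n)).sub (hmeas hξ hS)).abs.aestronglyMeasurable)
    (.of_forall fun n ↦ .of_forall fun u hu ↦ by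
      rw [Real.norm_eq_abs, abs_abs]
      exact (abs_sub _ _).trans (add_le_add ((hξs n).abs_setIntegral_le hab hG _ (hsub hu))
        (hξ.abs_setIntegral_le hab hG _ (hsub hu))))
    intervalIntegrable_const
    (.of_forall fun u hu ↦ by
      have := fun n ↦ (hξs n).isFiniteMeasure u
      have hconv := hG.tendsto_setIntegral hab (fun n ↦ (hξs n).measureReal_le u (hsub hu))
        (hweak u (hsub hu) _ (hG.continuousOn (S u))) (hlim u (hsub hu))
      simpa using (hconv.sub_const (∫ x in Icc a b, G (S u) x ∂ξ u)).abs)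

theorem tendsto_intervalIntegral_setIntegral_comp (hab : a ≤ b)
    (hG : IsLipschitzKernel (Icc a b) M L G)
    (hξs : ∀ n, IsBoundedMeasureFamily (Icc a b) T C (ξs n))
    (hξ : IsBoundedMeasureFamily (Icc a b) T C ξ)
    (hweak : ∀ u ∈ Icc 0 T, ∀ g : ℝ → ℝ, ContinuousOn g (Icc a b) →
      Tendsto (fun n ↦ ∫ x in Icc a b, g x ∂ξs n u) atTop (𝓝 (∫ x in Icc a b, g x ∂ξ u)))
    (hSs : ∀ n, ContinuousOn (Ss n) (Icc 0 T)) (hS : ContinuousOn S (Icc 0 T))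
    (hlim : ∀ u ∈ Icc 0 T, Tendsto (fun n ↦ Ss n u) atTop (𝓝 (S u))) {t : ℝ} (ht : t ∈ Icc 0 T) :
    Tendsto (fun n ↦ ∫ u in 0..t, ∫ x in Icc a b, G (Ss n u) x ∂ξs n u) atTop
      (𝓝 (∫ u in 0..t, ∫ x in Icc a b, G (S u) x ∂ξ u)) := by
  refine tendsto_iff_norm_sub_tendsto_zero.2 <| squeeze_zero (fun _ ↦ norm_nonneg _) (fun n ↦ ?_)
    (tendsto_intervalIntegral_abs_sub_setIntegral_comp hab hG hξs hξ hweak hSs hS hlim ht)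
  rw [← intervalIntegral.integral_sub
    ((hξs n).intervalIntegrable_setIntegral_comp hab hG (hSs n) ht)
    (hξ.intervalIntegrable_setIntegral_comp hab hG hS ht)]
  exact intervalIntegral.norm_integral_le_integral_norm ht.1

end WeakConvergence

section Substrate

variable {mmax D sIn k V M L T C : ℝ} {rg : ℝ → ℝ → ℝ}

lemma intervalIntegrable_subIntegrand (hmmax : 0 ≤ mmax)
    (hrg : IsLipschitzKernel (Icc 0 mmax) M L rg) {ξ : ℝ → Measure ℝ}
    (hξ : IsBoundedMeasureFamily (Icc 0 mmax) T C ξ) {S : ℝ → ℝ} (hS : ContinuousOn S (Icc 0 T))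
    {t : ℝ} (ht : t ∈ Icc 0 T) :
    IntervalIntegrable (subIntegrand mmax D sIn k V rg S ξ) volume 0 t :=
  ((continuousOn_const.mul (continuousOn_const.sub hS)).mono
    (uIcc_subset_Icc (left_mem_Icc.2 (ht.1.trans ht.2)) ht)).intervalIntegrable.sub
    ((hξ.intervalIntegrable_setIntegral_comp hmmax hrg hS ht).const_mul (k / V))

lemma abs_subIntegrand_sub_le (hmmax : 0 ≤ mmax) (hrg : IsLipschitzKernel (Icc 0 mmax) M L rg)
    {S₁ S₂ : ℝ → ℝ} {ξ₁ ξ₂ : ℝ → Measure ℝ} {u : ℝ} [IsFiniteMeasure (ξ₁ u)]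
    (hmass : (ξ₁ u).real (Icc 0 mmax) ≤ C) :
    |subIntegrand mmax D sIn k V rg S₁ ξ₁ u - subIntegrand mmax D sIn k V rg S₂ ξ₂ u|
      ≤ (|D| + |k / V| * L * C) * |S₁ u - S₂ u|
        + |k / V| *
          |∫ x in Icc 0 mmax, rg (S₂ u) x ∂ξ₁ u - ∫ x in Icc 0 mmax, rg (S₂ u) x ∂ξ₂ u| := by
  set I₁ := ∫ x in Icc 0 mmax, rg (S₁ u) x ∂ξ₁ u
  set I₁₂ := ∫ x in Icc 0 mmax, rg (S₂ u) x ∂ξ₁ u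
  set I₂ := ∫ x in Icc 0 mmax, rg (S₂ u) x ∂ξ₂ u
  have hlip : |I₁ - I₁₂| ≤ L * |S₁ u - S₂ u| * C :=
    (hrg.abs_setIntegral_sub_le _ _).trans (mul_le_mul_of_nonneg_left hmass
      (by have := hrg.lipschitz_nonneg hmmax; positivity))
  have hsplit : subIntegrand mmax D sIn k V rg S₁ ξ₁ u - subIntegrand mmax D sIn k V rg S₂ ξ₂ u
      = -(D * (S₁ u - S₂ u)) - k / V * ((I₁ - I₁₂) + (I₁₂ - I₂)) := by
    simp only [subIntegrand, I₁, I₂]; ring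
  calc _ ≤ |D| * |S₁ u - S₂ u| + |k / V| * (|I₁ - I₁₂| + |I₁₂ - I₂|) := by
        rw [hsplit]
        refine (abs_sub _ _).trans ?_
        rw [abs_neg, abs_mul, abs_mul]
        gcongr
        exact abs_add_le _ _
    _ ≤ |D| * |S₁ u - S₂ u| + |k / V| * (L * |S₁ u - S₂ u| * C + |I₁₂ - I₂|) := by gcongr
    _ = _ := by ring

lemma abs_sub_le_add_mul_integral_of_eq_subIntegrand (hmmax : 0 ≤ mmax)
    (hrg : IsLipschitzKernel (Icc 0 mmax) M L rg) {ξ₁ ξ₂ : ℝ → Measure ℝ}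
    (hξ₁ : IsBoundedMeasureFamily (Icc 0 mmax) T C ξ₁)
    (hξ₂ : IsBoundedMeasureFamily (Icc 0 mmax) T C ξ₂) {S₀ : ℝ} {S₁ S₂ : ℝ → ℝ}
    (hS₁ : ContinuousOn S₁ (Icc 0 T)) (hS₂ : ContinuousOn S₂ (Icc 0 T))
    (heq₁ : ∀ t ∈ Icc 0 T, S₁ t = S₀ + ∫ u in 0..t, subIntegrand mmax D sIn k V rg S₁ ξ₁ u)
    (heq₂ : ∀ t ∈ Icc 0 T, S₂ t = S₀ + ∫ u in 0..t, subIntegrand mmax D sIn k V rg S₂ ξ₂ u)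
    {t : ℝ} (ht : t ∈ Icc 0 T) :
    |S₁ t - S₂ t| ≤ |k / V| * (∫ u in 0..T,
        |∫ x in Icc 0 mmax, rg (S₂ u) x ∂ξ₁ u - ∫ x in Icc 0 mmax, rg (S₂ u) x ∂ξ₂ u|)
      + (|D| + |k / V| * L * C) * ∫ u in 0..t, |S₁ u - S₂ u| := by
  have hT : 0 ≤ T := ht.1.trans ht.2
  set dev := fun u ↦
    |∫ x in Icc 0 mmax, rg (S₂ u) x ∂ξ₁ u - ∫ x in Icc 0 mmax, rg (S₂ u) x ∂ξ₂ u|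
  have hdev : ∀ t ∈ Icc 0 T, IntervalIntegrable dev volume 0 t := fun t ht ↦
    ((hξ₁.intervalIntegrable_setIntegral_comp hmmax hrg hS₂ ht).sub
      (hξ₂.intervalIntegrable_setIntegral_comp hmmax hrg hS₂ ht)).abs
  have hint₁ : IntervalIntegrable (subIntegrand mmax D sIn k V rg S₁ ξ₁) volume 0 t :=
    intervalIntegrable_subIntegrand hmmax hrg hξ₁ hS₁ ht
  have hint₂ : IntervalIntegrable (subIntegrand mmax D sIn k V rg S₂ ξ₂) volume 0 t :=
    intervalIntegrable_subIntegrand hmmax hrg hξ₂ hS₂ ht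
  have hΔ : IntervalIntegrable (fun u ↦ |S₁ u - S₂ u|) volume 0 t :=
    ((hS₁.sub hS₂).abs.mono (uIcc_subset_Icc (left_mem_Icc.2 hT) ht)).intervalIntegrable
  calc |S₁ t - S₂ t|
      = |∫ u in 0..t, (subIntegrand mmax D sIn k V rg S₁ ξ₁ u
          - subIntegrand mmax D sIn k V rg S₂ ξ₂ u)| := by
        rw [intervalIntegral.integral_sub hint₁ hint₂, heq₁ t ht, heq₂ t ht,
          add_sub_add_left_eq_sub]
    _ ≤ ∫ u in 0..t, |subIntegrand mmax D sIn k V rg S₁ ξ₁ u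
          - subIntegrand mmax D sIn k V rg S₂ ξ₂ u| :=
        intervalIntegral.abs_integral_le_integral_abs ht.1
    _ ≤ ∫ u in 0..t, ((|D| + |k / V| * L * C) * |S₁ u - S₂ u| + |k / V| * dev u) :=
        intervalIntegral.integral_mono_on ht.1 (hint₁.sub hint₂).abs
          ((hΔ.const_mul _).add ((hdev t ht).const_mul _)) fun u hu ↦
            have := hξ₁.isFiniteMeasure u
            abs_subIntegrand_sub_le hmmax hrg
              (hξ₁.measureReal_le u (Icc_subset_Icc_right ht.2 hu))
    _ = (|D| + |k / V| * L * C) * (∫ u in 0..t, |S₁ u - S₂ u|)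
          + |k / V| * ∫ u in 0..t, dev u := by
        rw [intervalIntegral.integral_add (hΔ.const_mul _) ((hdev t ht).const_mul _),
          intervalIntegral.integral_const_mul, intervalIntegral.integral_const_mul]
    _ ≤ _ := by
        rw [add_comm]
        gcongr
        exact intervalIntegral.integral_mono_interval le_rfl ht.1 ht.2
          (.of_forall fun _ ↦ abs_nonneg _) (hdev T (right_mem_Icc.2 hT))

theorem abs_sub_le_of_eq_subIntegrand (hmmax : 0 ≤ mmax)
    (hrg : IsLipschitzKernel (Icc 0 mmax) M L rg) {ξ₁ ξ₂ : ℝ → Measure ℝ}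
    (hξ₁ : IsBoundedMeasureFamily (Icc 0 mmax) T C ξ₁)
    (hξ₂ : IsBoundedMeasureFamily (Icc 0 mmax) T C ξ₂) {S₀ : ℝ} {S₁ S₂ : ℝ → ℝ}
    (hS₁ : ContinuousOn S₁ (Icc 0 T)) (hS₂ : ContinuousOn S₂ (Icc 0 T))
    (heq₁ : ∀ t ∈ Icc 0 T, S₁ t = S₀ + ∫ u in 0..t, subIntegrand mmax D sIn k V rg S₁ ξ₁ u)
    (heq₂ : ∀ t ∈ Icc 0 T, S₂ t = S₀ + ∫ u in 0..t, subIntegrand mmax D sIn k V rg S₂ ξ₂ u)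
    {t : ℝ} (ht : t ∈ Icc 0 T) :
    |S₁ t - S₂ t| ≤ |k / V| * (∫ u in 0..T,
        |∫ x in Icc 0 mmax, rg (S₂ u) x ∂ξ₁ u - ∫ x in Icc 0 mmax, rg (S₂ u) x ∂ξ₂ u|)
      * Real.exp ((|D| + |k / V| * L * C) * T) := by
  have hT : 0 ≤ T := ht.1.trans ht.2
  have hC : 0 ≤ C := measureReal_nonneg.trans (hξ₁.measureReal_le 0 (left_mem_Icc.2 hT))
  have hb : 0 ≤ |D| + |k / V| * L * C := by have := hrg.lipschitz_nonneg hmmax; positivity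
  have hA : 0 ≤ |k / V| * ∫ u in 0..T,
      |∫ x in Icc 0 mmax, rg (S₂ u) x ∂ξ₁ u - ∫ x in Icc 0 mmax, rg (S₂ u) x ∂ξ₂ u| :=
    mul_nonneg (abs_nonneg _) (intervalIntegral.integral_nonneg hT fun _ _ ↦ abs_nonneg _)
  calc |S₁ t - S₂ t|
      ≤ _ * Real.exp ((|D| + |k / V| * L * C) * t) :=
        le_mul_exp_of_le_add_mul_integral hb (hS₁.sub hS₂).abs
          (fun _ ht' ↦ abs_sub_le_add_mul_integral_of_eq_subIntegrand hmmax hrg hξ₁ hξ₂ hS₁ hS₂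
            heq₁ heq₂ ht') t ht
    _ ≤ _ := by gcongr; exact ht.2

theorem tendsto_of_eq_subIntegrand (hmmax : 0 ≤ mmax)
    (hrg : IsLipschitzKernel (Icc 0 mmax) M L rg) {ξs : ℕ → ℝ → Measure ℝ} {ξ : ℝ → Measure ℝ}
    (hξs : ∀ n, IsBoundedMeasureFamily (Icc 0 mmax) T C (ξs n))
    (hξ : IsBoundedMeasureFamily (Icc 0 mmax) T C ξ)
    (hweak : ∀ u ∈ Icc 0 T, ∀ g : ℝ → ℝ, ContinuousOn g (Icc 0 mmax) →
      Tendsto (fun n ↦ ∫ x in Icc 0 mmax, g x ∂ξs n u) atTop (𝓝 (∫ x in Icc 0 mmax, g x ∂ξ u)))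
    {S₀ : ℝ} {Ss : ℕ → ℝ → ℝ} {S : ℝ → ℝ}
    (hSs : ∀ n, ContinuousOn (Ss n) (Icc 0 T)) (hS : ContinuousOn S (Icc 0 T))
    (heqs : ∀ n, ∀ t ∈ Icc 0 T,
      Ss n t = S₀ + ∫ u in 0..t, subIntegrand mmax D sIn k V rg (Ss n) (ξs n) u)
    (heq : ∀ t ∈ Icc 0 T, S t = S₀ + ∫ u in 0..t, subIntegrand mmax D sIn k V rg S ξ u)
    {t : ℝ} (ht : t ∈ Icc 0 T) :
    Tendsto (fun n ↦ Ss n t) atTop (𝓝 (S t)) := by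
  have hdev := tendsto_intervalIntegral_abs_sub_setIntegral_comp hmmax hrg hξs hξ hweak
    (fun _ ↦ hS) hS (fun _ _ ↦ tendsto_const_nhds) (right_mem_Icc.2 (ht.1.trans ht.2))
  refine tendsto_iff_norm_sub_tendsto_zero.2 <| squeeze_zero (fun _ ↦ norm_nonneg _)
    (fun n ↦ abs_sub_le_of_eq_subIntegrand hmmax hrg (hξs n) hξ (hSs n) hS (heqs n) heq ht) ?_
  simpa using (hdev.const_mul |k / V|).mul_const (Real.exp ((|D| + |k / V| * L * C) * T))

end Substrate

section Population

variable {mmax D T C M₁ L₁ M₂ L₂ M₃ : ℝ} {rg lam : ℝ → ℝ → ℝ} {Q : Measure ℝ} {f : ℝ → ℝ}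

lemma intervalIntegral_popIntegrand (hmmax : 0 ≤ mmax)
    (hG₁ : IsLipschitzKernel (Icc 0 mmax) M₁ L₁ fun s x ↦ rg s x * deriv f x)
    (hG₂ : IsLipschitzKernel (Icc 0 mmax) M₂ L₂ fun s x ↦
      ∫ α in Icc 0 1, lam s x * (f (α * x) + f ((1 - α) * x) - f x) ∂Q)
    (hG₃ : IsLipschitzKernel (Icc 0 mmax) M₃ 0 fun _ ↦ f) {ξ : ℝ → Measure ℝ}
    (hξ : IsBoundedMeasureFamily (Icc 0 mmax) T C ξ) {S : ℝ → ℝ} (hS : ContinuousOn S (Icc 0 T))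
    {t : ℝ} (ht : t ∈ Icc 0 T) :
    ∫ u in 0..t, popIntegrand mmax D rg lam Q f S ξ u
      = (∫ u in 0..t, ∫ x in Icc 0 mmax, rg (S u) x * deriv f x ∂ξ u)
        + (∫ u in 0..t, ∫ x in Icc 0 mmax,
            ∫ α in Icc 0 1, lam (S u) x * (f (α * x) + f ((1 - α) * x) - f x) ∂Q ∂ξ u)
        - D * ∫ u in 0..t, ∫ x in Icc 0 mmax, f x ∂ξ u := by
  have h₁ := hξ.intervalIntegrable_setIntegral_comp hmmax hG₁ hS ht
  have h₂ := hξ.intervalIntegrable_setIntegral_comp hmmax hG₂ hS ht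
  have h₃ := hξ.intervalIntegrable_setIntegral_comp hmmax hG₃ hS ht
  rw [← intervalIntegral.integral_add h₁ h₂, ← intervalIntegral.integral_const_mul,
    ← intervalIntegral.integral_sub (h₁.add h₂) (h₃.const_mul D)]
  rfl

theorem tendsto_Psi (hmmax : 0 ≤ mmax)
    (hG₁ : IsLipschitzKernel (Icc 0 mmax) M₁ L₁ fun s x ↦ rg s x * deriv f x)
    (hG₂ : IsLipschitzKernel (Icc 0 mmax) M₂ L₂ fun s x ↦
      ∫ α in Icc 0 1, lam s x * (f (α * x) + f ((1 - α) * x) - f x) ∂Q)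
    (hG₃ : IsLipschitzKernel (Icc 0 mmax) M₃ 0 fun _ ↦ f)
    {ξs : ℕ → ℝ → Measure ℝ} {ξ : ℝ → Measure ℝ}
    (hξs : ∀ n, IsBoundedMeasureFamily (Icc 0 mmax) T C (ξs n))
    (hξ : IsBoundedMeasureFamily (Icc 0 mmax) T C ξ)
    (hweak : ∀ u ∈ Icc 0 T, ∀ g : ℝ → ℝ, ContinuousOn g (Icc 0 mmax) →
      Tendsto (fun n ↦ ∫ x in Icc 0 mmax, g x ∂ξs n u) atTop (𝓝 (∫ x in Icc 0 mmax, g x ∂ξ u)))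
    {Ss : ℕ → ℝ → ℝ} {S : ℝ → ℝ}
    (hSs : ∀ n, ContinuousOn (Ss n) (Icc 0 T)) (hS : ContinuousOn S (Icc 0 T))
    (hlim : ∀ u ∈ Icc 0 T, Tendsto (fun n ↦ Ss n u) atTop (𝓝 (S u))) {t : ℝ} (ht : t ∈ Icc 0 T) :
    Tendsto (fun n ↦ Psi mmax D rg lam Q f (Ss n) (ξs n) t) atTop
      (𝓝 (Psi mmax D rg lam Q f S ξ t)) := by
  have hT : 0 ≤ T := ht.1.trans ht.2
  have hint : ∀ {M L : ℝ} {G : ℝ → ℝ → ℝ}, IsLipschitzKernel (Icc 0 mmax) M L G →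
      Tendsto (fun n ↦ ∫ u in 0..t, ∫ x in Icc 0 mmax, G (Ss n u) x ∂ξs n u) atTop
        (𝓝 (∫ u in 0..t, ∫ x in Icc 0 mmax, G (S u) x ∂ξ u)) := fun hG ↦
    tendsto_intervalIntegral_setIntegral_comp hmmax hG hξs hξ hweak hSs hS hlim ht
  have hweak_f : ∀ u ∈ Icc 0 T, Tendsto (fun n ↦ ∫ x in Icc 0 mmax, f x ∂ξs n u) atTop
      (𝓝 (∫ x in Icc 0 mmax, f x ∂ξ u)) := fun u hu ↦ hweak u hu f (hG₃.continuousOn 0)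
  unfold Psi
  simp only [intervalIntegral_popIntegrand hmmax hG₁ hG₂ hG₃ (hξs _) (hSs _) ht,
    intervalIntegral_popIntegrand hmmax hG₁ hG₂ hG₃ hξ hS ht]
  exact ((hweak_f t ht).sub (hweak_f 0 (left_mem_Icc.2 hT))).sub
    (((hint hG₁).add (hint hG₂)).sub ((hint hG₃).const_mul D))

end Population

namespace ChemostatHyps

variable {mmax D sIn k V gbar lamBar kg klam : ℝ} {rg lam : ℝ → ℝ → ℝ} {Q : Measure ℝ}

lemma isLipschitzKernel_rg (hyp : ChemostatHyps mmax D sIn k V gbar lamBar kg klam rg lam Q)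
    (hc : ContinuousOn (fun sx : ℝ × ℝ ↦ rg sx.1 sx.2) (Ici 0 ×ˢ Icc 0 mmax))
    (hext : ∀ s x, rg s x = rg (max s 0) x) : IsLipschitzKernel (Icc 0 mmax) gbar kg rg :=
  .of_extend_max hc hext hyp.kg_nonneg
    (fun s hs x hx ↦ (abs_of_nonneg (hyp.rg_nonneg s hs x hx)).trans_le (hyp.rg_le s hs x hx))
    hyp.rg_lip

lemma isLipschitzKernel_lam (hyp : ChemostatHyps mmax D sIn k V gbar lamBar kg klam rg lam Q)
    (hc : ContinuousOn (fun sx : ℝ × ℝ ↦ lam sx.1 sx.2) (Ici 0 ×ˢ Icc 0 mmax))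
    (hext : ∀ s x, lam s x = lam (max s 0) x) : IsLipschitzKernel (Icc 0 mmax) lamBar klam lam :=
  .of_extend_max hc hext hyp.klam_nonneg
    (fun s hs x hx ↦ (abs_of_nonneg (hyp.lam_nonneg s hs x hx)).trans_le (hyp.lam_le s hs x hx))
    hyp.lam_lip

lemma exists_isLipschitzKernel_growth
    (hyp : ChemostatHyps mmax D sIn k V gbar lamBar kg klam rg lam Q)
    (hc : ContinuousOn (fun sx : ℝ × ℝ ↦ rg sx.1 sx.2) (Ici 0 ×ˢ Icc 0 mmax))
    (hext : ∀ s x, rg s x = rg (max s 0) x) {f : ℝ → ℝ} (hf : ContDiff ℝ 1 f) :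
    ∃ M L, IsLipschitzKernel (Icc 0 mmax) M L fun s x ↦ rg s x * deriv f x := by
  have hf' := (hf.continuous_deriv le_rfl).continuousOn (s := Icc 0 mmax)
  obtain ⟨N, hN⟩ := isCompact_Icc.exists_bound_of_continuousOn hf'
  exact ⟨_, _, (hyp.isLipschitzKernel_rg hc hext).mul_right hf' hN⟩

lemma exists_isLipschitzKernel_division
    (hyp : ChemostatHyps mmax D sIn k V gbar lamBar kg klam rg lam Q)
    (hc : ContinuousOn (fun sx : ℝ × ℝ ↦ lam sx.1 sx.2) (Ici 0 ×ˢ Icc 0 mmax))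
    (hext : ∀ s x, lam s x = lam (max s 0) x) {f : ℝ → ℝ} (hf : Continuous f) :
    ∃ M L, IsLipschitzKernel (Icc 0 mmax) M L fun s x ↦
      ∫ α in Icc 0 1, lam s x * (f (α * x) + f ((1 - α) * x) - f x) ∂Q := by
  have := hyp.Q_prob
  have hfrag : Continuous fun x ↦ ∫ α in Icc 0 1, (f (α * x) + f ((1 - α) * x) - f x) ∂Q :=
    continuous_parametric_integral_of_continuous (by fun_prop) isCompact_Icc
  obtain ⟨N, hN⟩ := isCompact_Icc.exists_bound_of_continuousOn hfrag.continuousOn (s := Icc 0 mmax)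
  simp_rw [integral_const_mul]
  exact ⟨_, _, (hyp.isLipschitzKernel_lam hc hext).mul_right hfrag.continuousOn hN⟩

end ChemostatHyps

theorem Psi_continuous_in_prokhorov_general
    (mmax D sIn k V gbar lamBar kg klam : ℝ)
    (rg lam : ℝ → ℝ → ℝ) (Q : Measure ℝ)
    (hyp : ChemostatHyps mmax D sIn k V gbar lamBar kg klam rg lam Q)
    (hrg_cont : ContinuousOn (fun sx : ℝ × ℝ => rg sx.1 sx.2)
      (Set.Ici 0 ×ˢ Set.Icc 0 mmax))
    (hlam_cont : ContinuousOn (fun sx : ℝ × ℝ => lam sx.1 sx.2)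
      (Set.Ici 0 ×ˢ Set.Icc 0 mmax))
    -- `ρ_g`, `λ` are extended to negative concentrations by `g(s,x) = g(max(s,0),x)`
    (hrg_ext : ∀ s x, rg s x = rg (max s 0) x)
    (hlam_ext : ∀ s x, lam s x = lam (max s 0) x)
    (T : ℝ) (S₀ : ℝ)
    (f : ℝ → ℝ) (hf : ContDiff ℝ 1 f)
    (ζn : ℕ → ℝ → Measure ℝ) (ζ : ℝ → Measure ℝ)
    (hfin_n : ∀ n u, IsFiniteMeasure (ζn n u)) (hfin : ∀ u, IsFiniteMeasure (ζ u))
    (hsupp_n : ∀ n u, (ζn n u) (Set.Icc (0:ℝ) mmax)ᶜ = 0)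
    (hsupp : ∀ u, (ζ u) (Set.Icc (0:ℝ) mmax)ᶜ = 0)
    (hmeas_n : ∀ n, ∀ g : ℝ → ℝ, Continuous g →
      Measurable fun u => ∫ x in Set.Icc (0:ℝ) mmax, g x ∂(ζn n u))
    (hmeas : ∀ g : ℝ → ℝ, Continuous g →
      Measurable fun u => ∫ x in Set.Icc (0:ℝ) mmax, g x ∂(ζ u))
    -- `sup_n sup_{0 ≤ u ≤ T} ⟨ζⁿ_u, 1⟩ < ∞` and `sup_{0 ≤ u ≤ T} ⟨ζ_u, 1⟩ < ∞`
    (C : ℝ)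
    (hmass_n : ∀ n, ∀ u ∈ Set.Icc (0:ℝ) T, ((ζn n u) (Set.Icc (0:ℝ) mmax)).toReal ≤ C)
    (hmass : ∀ u ∈ Set.Icc (0:ℝ) T, ((ζ u) (Set.Icc (0:ℝ) mmax)).toReal ≤ C)
    -- the substrate trajectories `S^{ζⁿ}` and `S^ζ`
    (Szn : ℕ → ℝ → ℝ) (Sz : ℝ → ℝ)
    (hSzn_cont : ∀ n, ContinuousOn (Szn n) (Set.Icc 0 T))
    (hSz_cont : ContinuousOn Sz (Set.Icc 0 T))
    (hSzn_eq : ∀ n, ∀ t ∈ Set.Icc (0:ℝ) T,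
      Szn n t = S₀ + ∫ u in (0:ℝ)..t, subIntegrand mmax D sIn k V rg (Szn n) (ζn n) u)
    (hSz_eq : ∀ t ∈ Set.Icc (0:ℝ) T,
      Sz t = S₀ + ∫ u in (0:ℝ)..t, subIntegrand mmax D sIn k V rg Sz ζ u)
    -- uniform convergence in the Lévy–Prokhorov metric
    (hconv : ∀ ε : ℝ, 0 < ε → ∃ N : ℕ, ∀ n ≥ N, ∀ u ∈ Set.Icc (0:ℝ) T,
      prokhorovDist (ζn n u) (ζ u) ≤ ε) :
    ∀ t ∈ Set.Icc (0:ℝ) T,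
      Tendsto (fun n => Psi mmax D rg lam Q f (Szn n) (ζn n) t) atTop
        (nhds (Psi mmax D rg lam Q f Sz ζ t)) := by
  intro t ht
  have hmmax : 0 ≤ mmax := hyp.mmax_pos.le
  have hξs : ∀ n, IsBoundedMeasureFamily (Icc 0 mmax) T C (ζn n) := fun n ↦
    ⟨hfin_n n, hmeas_n n, hmass_n n⟩
  have hξ : IsBoundedMeasureFamily (Icc 0 mmax) T C ζ := ⟨hfin, hmeas, hmass⟩
  have hweak : ∀ u ∈ Icc 0 T, ∀ g : ℝ → ℝ, ContinuousOn g (Icc 0 mmax) →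
      Tendsto (fun n ↦ ∫ x in Icc 0 mmax, g x ∂ζn n u) atTop
        (𝓝 (∫ x in Icc 0 mmax, g x ∂ζ u)) := by
    intro u hu g hg
    have := hfin u
    have := fun n ↦ hfin_n n u
    refine tendsto_setIntegral_Icc_of_tendsto_levyProkhorovEDist hmmax (hsupp_n · u) (hsupp u)
      (tendsto_levyProkhorovEDist_of_prokhorovDist fun ε hε ↦ ?_) hg
    obtain ⟨N, hN⟩ := hconv ε hε
    exact eventually_atTop.2 ⟨N, fun n hn ↦ hN n hn u hu⟩
  have hS : ∀ u ∈ Icc 0 T, Tendsto (fun n ↦ Szn n u) atTop (𝓝 (Sz u)) := fun u hu ↦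
    tendsto_of_eq_subIntegrand hmmax (hyp.isLipschitzKernel_rg hrg_cont hrg_ext) hξs hξ hweak
      hSzn_cont hSz_cont hSzn_eq hSz_eq hu
  obtain ⟨M₁, L₁, hG₁⟩ := hyp.exists_isLipschitzKernel_growth hrg_cont hrg_ext hf
  obtain ⟨M₂, L₂, hG₂⟩ := hyp.exists_isLipschitzKernel_division hlam_cont hlam_ext hf.continuous
  obtain ⟨M₃, hM₃⟩ := isCompact_Icc.exists_bound_of_continuousOn hf.continuous.continuousOn
    (s := Icc 0 mmax)
  exact tendsto_Psi hmmax hG₁ hG₂ (.const hf.continuous.continuousOn hM₃) hξs hξ hweak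
    hSzn_cont hSz_cont hS ht

/-- Assume moreover that `ρ_g` and `λ` are continuous on `[0,∞) × X`.
If `ζⁿ → ζ` uniformly on `[0,T]` in the Lévy–Prokhorov metric, the masses being uniformly
bounded, then `Ψ_t(ζⁿ) → Ψ_t(ζ)` for every `t ∈ [0,T]`. -/
theorem Psi_continuous_in_prokhorov
    (mmax D sIn k V gbar lamBar kg klam : ℝ)
    (rg lam : ℝ → ℝ → ℝ) (Q : Measure ℝ)
    (hyp : ChemostatHyps mmax D sIn k V gbar lamBar kg klam rg lam Q)
    (hrg_cont : ContinuousOn (fun sx : ℝ × ℝ => rg sx.1 sx.2)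
      (Set.Ici 0 ×ˢ Set.Icc 0 mmax))
    (hlam_cont : ContinuousOn (fun sx : ℝ × ℝ => lam sx.1 sx.2)
      (Set.Ici 0 ×ˢ Set.Icc 0 mmax))
    -- `ρ_g`, `λ` are extended to negative concentrations by `g(s,x) = g(max(s,0),x)`
    (hrg_ext : ∀ s x, rg s x = rg (max s 0) x)
    (hlam_ext : ∀ s x, lam s x = lam (max s 0) x)
    (T : ℝ) (hT : 0 < T) (S₀ : ℝ) (hS₀ : 0 ≤ S₀)
    (f : ℝ → ℝ) (hf : ContDiff ℝ 1 f)
    (ζn : ℕ → ℝ → Measure ℝ) (ζ : ℝ → Measure ℝ)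
    (hfin_n : ∀ n u, IsFiniteMeasure (ζn n u)) (hfin : ∀ u, IsFiniteMeasure (ζ u))
    (hsupp_n : ∀ n u, (ζn n u) (Set.Icc (0:ℝ) mmax)ᶜ = 0)
    (hsupp : ∀ u, (ζ u) (Set.Icc (0:ℝ) mmax)ᶜ = 0)
    (hmeas_n : ∀ n, ∀ g : ℝ → ℝ, Continuous g →
      Measurable fun u => ∫ x in Set.Icc (0:ℝ) mmax, g x ∂(ζn n u))
    (hmeas : ∀ g : ℝ → ℝ, Continuous g →
      Measurable fun u => ∫ x in Set.Icc (0:ℝ) mmax, g x ∂(ζ u))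
    -- `sup_n sup_{0 ≤ u ≤ T} ⟨ζⁿ_u, 1⟩ < ∞` and `sup_{0 ≤ u ≤ T} ⟨ζ_u, 1⟩ < ∞`
    (C : ℝ)
    (hmass_n : ∀ n, ∀ u ∈ Set.Icc (0:ℝ) T, ((ζn n u) (Set.Icc (0:ℝ) mmax)).toReal ≤ C)
    (hmass : ∀ u ∈ Set.Icc (0:ℝ) T, ((ζ u) (Set.Icc (0:ℝ) mmax)).toReal ≤ C)
    -- the substrate trajectories `S^{ζⁿ}` and `S^ζ`
    (Szn : ℕ → ℝ → ℝ) (Sz : ℝ → ℝ)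
    (hSzn_cont : ∀ n, ContinuousOn (Szn n) (Set.Icc 0 T))
    (hSz_cont : ContinuousOn Sz (Set.Icc 0 T))
    (hSzn_eq : ∀ n, ∀ t ∈ Set.Icc (0:ℝ) T,
      Szn n t = S₀ + ∫ u in (0:ℝ)..t, subIntegrand mmax D sIn k V rg (Szn n) (ζn n) u)
    (hSz_eq : ∀ t ∈ Set.Icc (0:ℝ) T,
      Sz t = S₀ + ∫ u in (0:ℝ)..t, subIntegrand mmax D sIn k V rg Sz ζ u)
    -- uniform convergence in the Lévy–Prokhorov metric
    (hconv : ∀ ε : ℝ, 0 < ε → ∃ N : ℕ, ∀ n ≥ N, ∀ u ∈ Set.Icc (0:ℝ) T,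
      prokhorovDist (ζn n u) (ζ u) ≤ ε) :
    ∀ t ∈ Set.Icc (0:ℝ) T,
      Tendsto (fun n => Psi mmax D rg lam Q f (Szn n) (ζn n) t) atTop
        (nhds (Psi mmax D rg lam Q f Sz ζ t)) :=
  Psi_continuous_in_prokhorov_general mmax D sIn k V gbar lamBar kg klam rg lam Q hyp hrg_cont
    hlam_cont hrg_ext hlam_ext T S₀ f hf ζn ζ hfin_n hfin hsupp_n hsupp hmeas_n hmeas C hmass_n
    hmass Szn Sz hSzn_cont hSz_cont hSzn_eq hSz_eq hconv
end
end
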